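/- arXiv:2101.05264 — 10 statements merged into one kernel-verified Lean document; each statement's English description precedes it below -/
import Mathlib

section
/- Let D be a strongly connected tournament, let r be a ray in D, and let v be a vertex of D not in the image of r. Then v can be inserted into r, i.e. there exist a ray r' of D and natural numbers i, k such that r' n = r n for all n < i, r' (n + k) = r n for all n ≥ i, and v lies in the image of r'. -/
/-!
If `v` has an out-neighbour on the ray, insert `v` just before the first one, `r n`: every earlier
`r j` beats `v` because `D` is a tournament. Otherwise every ray vertex beats `v`, and strong
connectivity gives a walk from `v` back to the ray. A shortest such walk is a path that meets the
ray only in its last vertex `r m`, so it can be inserted in front of `r m`.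
-/

namespace Relation

variable {V : Type*} {E : V → V → Prop}

def IsWalk (E : V → V → Prop) (p : ℕ → V) (L : ℕ) : Prop :=
  ∀ t < L, E (p t) (p (t + 1))

theorem exists_isWalk_of_reflTransGen {a b : V} (h : ReflTransGen E a b) :
    ∃ L p, p 0 = a ∧ p L = b ∧ IsWalk E p L := by
  induction h using ReflTransGen.head_induction_on with
  | refl => exact ⟨0, fun _ => b, rfl, rfl, fun t ht => absurd ht t.not_lt_zero⟩
  | @head a c hac _ ih =>
    obtain ⟨L, p, hp0, hpL, hp⟩ := ih
    refine ⟨L + 1, fun t => Nat.casesOn t a p, rfl, hpL, ?_⟩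
    rintro (_ | t) ht
    · simpa [hp0] using hac
    · exact hp t (by omega)

theorem IsWalk.exists_shortcut {p : ℕ → V} {L a b : ℕ} (hp : IsWalk E p L) (hab : a ≤ b)
    (hbL : b ≤ L) (heq : p a = p b) :
    ∃ p', p' 0 = p 0 ∧ p' (L - (b - a)) = p L ∧ IsWalk E p' (L - (b - a)) := by
  refine ⟨fun t => if t ≤ a then p t else p (t + (b - a)), by simp, ?_, ?_⟩
  · by_cases hb : b = L
    · subst hb; simp [show b - (b - a) = a by omega, heq]
    · simp [show ¬ L - (b - a) ≤ a by omega, show L - (b - a) + (b - a) = L by omega]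
  · intro t ht
    rcases lt_trichotomy t a with h | rfl | h
    · simpa [h.le, show t + 1 ≤ a by omega] using hp t (by omega)
    · simpa [heq, show t + 1 + (b - t) = b + 1 by omega] using hp b (by omega)
    · simpa [show ¬ t ≤ a by omega, show ¬ t + 1 ≤ a by omega,
        show t + 1 + (b - a) = t + (b - a) + 1 by omega] using hp (t + (b - a)) (by omega)

theorem exists_injOn_isWalk_of_exists_isWalk {S : Set V} {a : V}
    (h : ∃ L p, p 0 = a ∧ p L ∈ S ∧ IsWalk E p L) :
    ∃ L p, p 0 = a ∧ p L ∈ S ∧ IsWalk E p L ∧ (∀ t < L, p t ∉ S) ∧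
      Set.InjOn p (Set.Iic L) := by
  classical
  obtain ⟨p, hp0, hpL, hp⟩ := Nat.find_spec h
  refine ⟨Nat.find h, p, hp0, hpL, hp, fun t ht hpt => ?_, ?_⟩
  · exact Nat.find_min h ht ⟨p, hp0, hpt, fun s hs => hp s (by omega)⟩
  · suffices ∀ a b, a < b → b ≤ Nat.find h → p a ≠ p b by
      intro a ha b hb heq
      by_contra hne
      rcases lt_or_gt_of_ne hne with hlt | hlt
      · exact this a b hlt hb heq
      · exact this b a hlt ha heq.symm
    intro a b hab hb heq
    obtain ⟨p', hp'0, hp'L, hp'⟩ := hp.exists_shortcut hab.le hb heq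
    exact Nat.find_min h (show Nat.find h - (b - a) < Nat.find h by omega)
      ⟨p', hp'0.trans hp0, hp'L ▸ hpL, hp'⟩

end Relation

namespace Ray

open Relation

variable {V : Type*} {E : V → V → Prop}

def splice (r q : ℕ → V) (i k : ℕ) (n : ℕ) : V :=
  if n < i then r n else if n < i + k then q (n - i) else r (n - k)

section splice

variable {r q : ℕ → V} {i k : ℕ}

theorem splice_of_lt {n : ℕ} (hn : n < i) : splice r q i k n = r n := by
  simp [splice, hn]

theorem splice_add_of_lt {t : ℕ} (ht : t < k) : splice r q i k (i + t) = q t := by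
  simp [splice, ht]

theorem splice_self (hk : 0 < k) : splice r q i k i = q 0 := by
  simpa using splice_add_of_lt (r := r) (i := i) hk

theorem splice_add_of_le {n : ℕ} (hn : i ≤ n) : splice r q i k (n + k) = r n := by
  simp [splice, show ¬ n + k < i by omega, hn]

theorem splice_injective (hr : Function.Injective r) (hq : Set.InjOn q (Set.Iio k))
    (hqr : ∀ t < k, q t ∉ Set.range r) : Function.Injective (splice r q i k) := by
  intro a b hab
  simp only [splice] at hab
  split_ifs at hab
  all_goals first
    | have := hr hab; omega
    | exact absurd ⟨_, hab⟩ (hqr _ (by omega))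
    | exact absurd ⟨_, hab.symm⟩ (hqr _ (by omega))
    | have := hq (show a - i < k by omega) (show b - i < k by omega) hab; omega

theorem rel_splice_succ (hr : ∀ n, E (r n) (r (n + 1))) (hk : 0 < k) (hq : IsWalk E q (k - 1))
    (hqr : E (q (k - 1)) (r i)) (hrq : ∀ j, j + 1 = i → E (r j) (q 0)) (n : ℕ) :
    E (splice r q i k n) (splice r q i k (n + 1)) := by
  rcases lt_or_ge (n + 1) i with h | h
  · rw [splice_of_lt h, splice_of_lt (by omega)]
    exact hr n
  rcases h.eq_or_lt with h | h
  · rw [splice_of_lt (by omega), ← h, splice_self hk]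
    exact hrq n h.symm
  obtain ⟨t, rfl⟩ := Nat.exists_eq_add_of_le (Nat.le_of_lt_succ h)
  rcases lt_or_ge (t + 1) k with h' | h'
  · rw [splice_add_of_lt (by omega), add_assoc, splice_add_of_lt h']
    exact hq t (by omega)
  rcases h'.eq_or_lt with h' | h'
  · rw [splice_add_of_lt (by omega), show i + t + 1 = i + k by omega, splice_add_of_le le_rfl,
      show t = k - 1 by omega]
    exact hqr
  · obtain ⟨m, rfl⟩ := Nat.exists_eq_add_of_le (Nat.le_of_lt_succ h')
    rw [show i + (k + m) = (i + m) + k by omega, splice_add_of_le (by omega),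
      show i + m + k + 1 = (i + m + 1) + k by omega, splice_add_of_le (by omega)]
    exact hr _

end splice

end Ray

open Relation Ray

theorem stmt_0_general {V : Type*} (E : V → V → Prop)
    (h_tour : ∀ u v : V, u ≠ v → Xor' (E u v) (E v u))
    (h_sc : ∀ u v : V, Relation.ReflTransGen E u v)
    (r : ℕ → V) (h_inj : Function.Injective r)
    (h_ray : ∀ n : ℕ, E (r n) (r (n + 1)))
    (v : V) (hv : v ∉ Set.range r) :
    ∃ (r' : ℕ → V) (i k : ℕ),
      Function.Injective r' ∧ (∀ n : ℕ, E (r' n) (r' (n + 1))) ∧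
      (∀ n : ℕ, n < i → r' n = r n) ∧
      (∀ n : ℕ, i ≤ n → r' (n + k) = r n) ∧
      v ∈ Set.range r' := by
  classical
  have into_v : ∀ n, ¬ E v (r n) → E (r n) v := fun n hn =>
    (Xor.or (h_tour v (r n) fun h => hv ⟨n, h.symm⟩)).resolve_left hn
  by_cases hout : ∃ n, E v (r n)
  · refine ⟨splice r (fun _ => v) (Nat.find hout) 1, Nat.find hout, 1,
      splice_injective h_inj (by simp) (fun _ _ => hv),
      rel_splice_succ h_ray one_pos (fun _ h => by omega) (Nat.find_spec hout)
        (fun j hj => into_v j (Nat.find_min hout (by omega))),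
      fun _ => splice_of_lt, fun _ => splice_add_of_le, _, splice_self one_pos⟩
  · obtain ⟨L₀, p₀, hp₀0, hp₀L, hp₀⟩ := exists_isWalk_of_reflTransGen (h_sc v (r 0))
    obtain ⟨L, p, hp0, ⟨m, hpL⟩, hp, hpr, hpinj⟩ :=
      exists_injOn_isWalk_of_exists_isWalk (S := Set.range r)
        ⟨L₀, p₀, hp₀0, hp₀L ▸ ⟨0, rfl⟩, hp₀⟩
    have hL : 0 < L := Nat.pos_of_ne_zero fun h => hv ⟨m, by rw [hpL, h, hp0]⟩
    have hlast : E (p (L - 1)) (r m) := by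
      simpa [Nat.sub_add_cancel hL, hpL] using hp (L - 1) (by omega)
    exact ⟨splice r p m L, m, L,
      splice_injective h_inj (hpinj.mono Set.Iio_subset_Iic_self) hpr,
      rel_splice_succ h_ray hL (fun t ht => hp t (by omega)) hlast
        (fun j _ => hp0 ▸ into_v j fun h => hout ⟨j, h⟩),
      fun _ => splice_of_lt, fun _ => splice_add_of_le, _, (splice_self hL).trans hp0⟩

theorem stmt_0 {V : Type*} (E : V → V → Prop)
    (h_irr : ∀ v : V, ¬ E v v)
    (h_tour : ∀ u v : V, u ≠ v → Xor' (E u v) (E v u))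
    (h_sc : ∀ u v : V, Relation.ReflTransGen E u v)
    (r : ℕ → V) (h_inj : Function.Injective r)
    (h_ray : ∀ n : ℕ, E (r n) (r (n + 1)))
    (v : V) (hv : v ∉ Set.range r) :
    ∃ (r' : ℕ → V) (i k : ℕ),
      Function.Injective r' ∧ (∀ n : ℕ, E (r' n) (r' (n + 1))) ∧
      (∀ n : ℕ, n < i → r' n = r n) ∧
      (∀ n : ℕ, i ≤ n → r' (n + k) = r n) ∧
      v ∈ Set.range r' :=
  stmt_0_general E h_tour h_sc r h_inj h_ray v hv
end

section
/- Let D be a strongly connected tournament, let w be a double ray in D, and let v be a vertex of D not in the image of w such that v has finite in-degree (the set {u : E u v} is finite) or finite out-degree (the set {u : E v u} is finite). Then v can be inserted into w, i.e. there exist a double ray w' of D, an integer i and a natural number k such that w' n = w n for all n < i, w' (n + k) = w n for all n ≥ i, and v lies in the image of w'. -/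
/-!
If `w n → v → w (n + 1)` for some `n`, then `v` fits between these two vertices. Otherwise, since
`D` is a tournament, the indices `n` with `w n → v` are closed upwards, so either `v` has
infinitely many in- and out-neighbours on `w`, which the degree condition excludes, or `v` beats
every vertex of `w`, or every vertex of `w` beats `v`. In the first of these cases a shortest path
from `w` to `v` leaves `w` at some `w n` and meets it nowhere else; its remaining vertices, followed
by the edge `v → w (n + 1)`, form a detour that replaces the edge `w n → w (n + 1)`. The other case
is symmetric, using a shortest path from `v` back to `w`.
-/

open Function Set

namespace Relation.ReflTransGen

variable {α : Type*} {r : α → α → Prop}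

theorem exists_path {a b : α} (h : ReflTransGen r a b) :
    ∃ (m : ℕ) (c : ℕ → α), c 0 = a ∧ c m = b ∧ ∀ j < m, r (c j) (c (j + 1)) := by
  induction h with
  | refl => exact ⟨0, fun _ => a, rfl, rfl, fun j hj => by omega⟩
  | @tail x y _ hxy ih =>
    obtain ⟨m, c, hc0, hcm, hc⟩ := ih
    refine ⟨m + 1, fun j => if j ≤ m then c j else y, by simpa using hc0, by simp, ?_⟩
    intro j hjm
    by_cases hj : j + 1 ≤ m
    · simpa [hj, show j ≤ m by omega] using hc j (by omega)
    · obtain rfl : j = m := by omega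
      simpa [hcm] using hxy

theorem exists_path_skip_loop {c : ℕ → α} {m j₁ j₂ : ℕ} (hc : ∀ j < m, r (c j) (c (j + 1)))
    (hlt : j₁ < j₂) (hj₂ : j₂ ≤ m) (heq : c j₁ = c j₂) :
    ∃ c' : ℕ → α, c' 0 = c 0 ∧ c' (m - (j₂ - j₁)) = c m ∧
      ∀ j < m - (j₂ - j₁), r (c' j) (c' (j + 1)) := by
  refine ⟨fun t => if t ≤ j₁ then c t else c (t + (j₂ - j₁)), by simp, ?_, ?_⟩
  · by_cases hend : j₂ = m
    · beta_reduce
      rw [if_pos (by omega), show m - (j₂ - j₁) = j₁ by omega, heq, hend]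
    · simp [show ¬ m - (j₂ - j₁) ≤ j₁ by omega, show m - (j₂ - j₁) + (j₂ - j₁) = m by omega]
  · intro t ht
    by_cases ht₁ : t + 1 ≤ j₁
    · simpa [ht₁, show t ≤ j₁ by omega] using hc t (by omega)
    by_cases ht₂ : t = j₁
    · subst ht₂
      simpa [heq, show t + 1 + (j₂ - t) = j₂ + 1 by omega] using hc j₂ (by omega)
    · simpa [ht₁, show ¬ t ≤ j₁ by omega, show t + 1 + (j₂ - j₁) = t + (j₂ - j₁) + 1 by omega]
        using hc (t + (j₂ - j₁)) (by omega)

theorem exists_injOn_path_from_set {S : Set α} {a b : α} (ha : a ∈ S) (h : ReflTransGen r a b) :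
    ∃ (m : ℕ) (c : ℕ → α), c 0 ∈ S ∧ c m = b ∧ (∀ j < m, r (c j) (c (j + 1))) ∧
      (∀ j ∈ Ioc 0 m, c j ∉ S) ∧ InjOn c (Icc 0 m) := by
  classical
  -- a shortest path from `S` to `b` can neither return to `S` nor contain a loop
  let P : ℕ → Prop := fun m => ∃ c : ℕ → α, c 0 ∈ S ∧ c m = b ∧ ∀ j < m, r (c j) (c (j + 1))
  have hP : ∃ m, P m := by
    obtain ⟨m, c, hc0, hcm, hc⟩ := h.exists_path
    exact ⟨m, c, hc0 ▸ ha, hcm, hc⟩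
  obtain ⟨c, hc0, hcm, hc⟩ : P (Nat.find hP) := Nat.find_spec hP
  set m := Nat.find hP
  have hmin : ∀ m' < m, ¬ P m' := fun _ => Nat.find_min hP
  refine ⟨m, c, hc0, hcm, hc, ?_, ?_⟩
  · rintro j ⟨hj0, hjm⟩ hjS
    refine hmin (m - j) (by omega) ⟨fun t => c (t + j), by simpa using hjS, ?_, ?_⟩
    · simpa [Nat.sub_add_cancel hjm] using hcm
    · intro t ht
      simpa [add_right_comm] using hc (t + j) (by omega)
  · intro j₁ hj₁ j₂ hj₂ heq
    by_contra hne
    wlog hlt : j₁ < j₂ generalizing j₁ j₂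
    · exact this hj₂ hj₁ heq.symm (Ne.symm hne) (by omega)
    obtain ⟨c', hc'0, hc'm, hc'⟩ := exists_path_skip_loop hc hlt hj₂.2 heq
    exact hmin _ (by have := hj₂.2; omega) ⟨c', hc'0 ▸ hc0, hc'm.trans hcm, hc'⟩

end Relation.ReflTransGen

theorem Monotone.forall_or_forall_not {α : Type*} [Preorder α] [NoMaxOrder α] [NoMinOrder α]
    {P : α → Prop} (hP : Monotone P) (hfin : {a | P a}.Finite ∨ {a | ¬ P a}.Finite) :
    (∀ a, P a) ∨ ∀ a, ¬ P a := by
  by_contra! ⟨⟨a, ha⟩, ⟨b, hb⟩⟩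
  rcases hfin with hfin | hfin
  · exact Set.Ici_infinite b <| hfin.subset fun x hx => hP hx hb
  · exact Set.Iic_infinite a <| hfin.subset fun x hx hPx => ha (hP hx hPx)

section Insertion

variable {V : Type*} {E : V → V → Prop}

def insertSegment (w d : ℤ → V) (i : ℤ) (k : ℕ) (n : ℤ) : V :=
  if n < i then w n else if n < i + k then d n else w (n - k)

variable {w d : ℤ → V} {i : ℤ} {k : ℕ}

theorem insertSegment_of_lt {n : ℤ} (hn : n < i) : insertSegment w d i k n = w n :=
  if_pos hn

theorem insertSegment_of_mem {n : ℤ} (hn : n ∈ Ico i (i + k)) : insertSegment w d i k n = d n := by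
  simp [insertSegment, hn.2, not_lt.2 hn.1]

theorem insertSegment_add {n : ℤ} (hn : i ≤ n) : insertSegment w d i k (n + k) = w n := by
  simp [insertSegment, show ¬ n + k < i by omega, show ¬ n + k < i + k by omega]

theorem insertSegment_injective (hw : Injective w) (hd : InjOn d (Ico i (i + k)))
    (hdw : ∀ n ∈ Ico i (i + k), d n ∉ range w) : Injective (insertSegment w d i k) := by
  intro a b hab
  simp only [insertSegment] at hab
  split_ifs at hab <;> first
    | have := hw hab; omega
    | exact absurd ⟨_, hab⟩ (hdw _ ⟨by omega, by omega⟩)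
    | exact absurd ⟨_, hab.symm⟩ (hdw _ ⟨by omega, by omega⟩)
    | exact hd ⟨by omega, by omega⟩ ⟨by omega, by omega⟩ hab

theorem insertSegment_chain (hk : 0 < k) (hw : ∀ n, E (w n) (w (n + 1)))
    (hentry : E (w (i - 1)) (d i)) (hexit : E (d (i + k - 1)) (w i))
    (hd : ∀ n, i ≤ n → n + 1 < i + k → E (d n) (d (n + 1))) (n : ℤ) :
    E (insertSegment w d i k n) (insertSegment w d i k (n + 1)) := by
  simp only [insertSegment]
  split_ifs <;> try omega
  · exact hw n
  · obtain rfl : i = n + 1 := by omega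
    simpa using hentry
  · exact hd n (by omega) (by omega)
  · obtain rfl : n = i + k - 1 := by omega
    simpa using hexit
  · simpa [sub_add_eq_add_sub] using hw (n - k)

def CanBeInserted (E : V → V → Prop) (w : ℤ → V) (v : V) : Prop :=
  ∃ (w' : ℤ → V) (i : ℤ) (k : ℕ),
    Injective w' ∧ (∀ n : ℤ, E (w' n) (w' (n + 1))) ∧
    (∀ n : ℤ, n < i → w' n = w n) ∧ (∀ n : ℤ, i ≤ n → w' (n + (k : ℤ)) = w n) ∧ v ∈ range w'

variable {v : V}

theorem canBeInserted_of_segment (hw : Injective w) (hray : ∀ n, E (w n) (w (n + 1)))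
    (hk : 0 < k) (hentry : E (w (i - 1)) (d i)) (hexit : E (d (i + k - 1)) (w i))
    (hd : ∀ n, i ≤ n → n + 1 < i + k → E (d n) (d (n + 1))) (hd_inj : InjOn d (Ico i (i + k)))
    (hdw : ∀ n ∈ Ico i (i + k), d n ∉ range w) (hv : ∃ n ∈ Ico i (i + k), d n = v) :
    CanBeInserted E w v := by
  obtain ⟨n, hn, rfl⟩ := hv
  exact ⟨insertSegment w d i k, i, k, insertSegment_injective hw hd_inj hdw,
    insertSegment_chain hk hray hentry hexit hd, fun _ => insertSegment_of_lt,
    fun _ => insertSegment_add, n, insertSegment_of_mem hn⟩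

theorem canBeInserted_of_between (hw : Injective w) (hray : ∀ n, E (w n) (w (n + 1)))
    (hv : v ∉ range w) {n : ℤ} (h₁ : E (w n) v) (h₂ : E v (w (n + 1))) : CanBeInserted E w v :=
  canBeInserted_of_segment (i := n + 1) (k := 1) (d := fun _ => v) hw hray one_pos
    (by simpa using h₁) h₂ (fun _ _ _ => by omega) (fun _ _ _ _ _ => by grind)
    (fun _ _ => hv) ⟨n + 1, by simp, rfl⟩

theorem canBeInserted_of_forall_out (hw : Injective w) (hray : ∀ n, E (w n) (w (n + 1)))
    (hv : v ∉ range w) (hout : ∀ n, E v (w n)) (hreach : Relation.ReflTransGen E (w 0) v) :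
    CanBeInserted E w v := by
  obtain ⟨m, c, ⟨n₀, hc0⟩, hcm, hc, hc_off, hc_inj⟩ :=
    hreach.exists_injOn_path_from_set (S := range w) ⟨0, rfl⟩
  have hm : 0 < m := Nat.pos_of_ne_zero fun hm => hv ⟨n₀, by subst hm; rw [hc0, hcm]⟩
  -- insert `c 1, …, c m = v` between `w n₀ = c 0` and `w (n₀ + 1)`
  refine canBeInserted_of_segment (i := n₀ + 1) (k := m) (d := fun n => c (n - n₀).toNat) hw hray
    hm (by simpa [hc0] using hc 0 hm) ?_ ?_ ?_ (fun n ⟨hn₁, hn₂⟩ => hc_off _ ⟨by omega, by omega⟩)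
    ⟨n₀ + m, ⟨by omega, by omega⟩, by simpa using hcm⟩
  · rw [show (n₀ + 1 + m - 1 - n₀).toNat = m by omega, hcm]
    exact hout _
  · intro n hn₁ hn₂
    rw [show (n + 1 - n₀).toNat = (n - n₀).toNat + 1 by omega]
    exact hc _ (by omega)
  · intro a ⟨ha₁, ha₂⟩ b ⟨hb₁, hb₂⟩ hab
    have := hc_inj ⟨by omega, by omega⟩ ⟨by omega, by omega⟩ hab
    omega

theorem canBeInserted_of_forall_in (hw : Injective w) (hray : ∀ n, E (w n) (w (n + 1)))
    (hv : v ∉ range w) (hin : ∀ n, E (w n) v) (hreach : Relation.ReflTransGen E v (w 0)) :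
    CanBeInserted E w v := by
  obtain ⟨m, c, ⟨n₀, hc0⟩, hcm, hc, hc_off, hc_inj⟩ :=
    (Relation.reflTransGen_swap.mpr hreach).exists_injOn_path_from_set (S := range w) ⟨0, rfl⟩
  have hm : 0 < m := Nat.pos_of_ne_zero fun hm => hv ⟨n₀, by subst hm; rw [hc0, hcm]⟩
  -- `c` runs backwards from `w n₀` to `v`; insert `v = c m, …, c 1` between `w (n₀ - 1)` and `w n₀`
  refine canBeInserted_of_segment (i := n₀) (k := m) (d := fun n => c (n₀ + m - n).toNat) hw hray
    hm (by simpa [hcm] using hin (n₀ - 1)) ?_ ?_ ?_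
    (fun n ⟨hn₁, hn₂⟩ => hc_off _ ⟨by omega, by omega⟩)
    ⟨n₀, ⟨by omega, by omega⟩, by simpa using hcm⟩
  · rw [show (n₀ + m - (n₀ + m - 1)).toNat = 1 by omega, hc0]
    exact hc 0 hm
  · intro n hn₁ hn₂
    rw [show (n₀ + m - n).toNat = (n₀ + m - (n + 1)).toNat + 1 by omega]
    exact hc _ (by omega)
  · intro a ⟨ha₁, ha₂⟩ b ⟨hb₁, hb₂⟩ hab
    have := hc_inj ⟨by omega, by omega⟩ ⟨by omega, by omega⟩ hab
    omega

end Insertion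

theorem stmt_2_general {V : Type*} (E : V → V → Prop)
    (h_tour : ∀ u v : V, u ≠ v → Xor' (E u v) (E v u))
    (h_sc : ∀ u v : V, Relation.ReflTransGen E u v)
    (w : ℤ → V) (h_inj : Function.Injective w)
    (h_ray : ∀ n : ℤ, E (w n) (w (n + 1)))
    (v : V) (hv : v ∉ Set.range w)
    (h_deg : {u : V | E u v}.Finite ∨ {u : V | E v u}.Finite) :
    ∃ (w' : ℤ → V) (i : ℤ) (k : ℕ),
      Function.Injective w' ∧ (∀ n : ℤ, E (w' n) (w' (n + 1))) ∧
      (∀ n : ℤ, n < i → w' n = w n) ∧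
      (∀ n : ℤ, i ≤ n → w' (n + (k : ℤ)) = w n) ∧
      v ∈ Set.range w' := by
  have hdir : ∀ n, E (w n) v ∨ E v (w n) := fun n => Xor.or (h_tour _ _ fun h => hv ⟨n, h⟩)
  by_cases hbetween : ∃ n, E (w n) v ∧ E v (w (n + 1))
  · obtain ⟨n, h₁, h₂⟩ := hbetween
    exact canBeInserted_of_between h_inj h_ray hv h₁ h₂
  push Not at hbetween
  have hmono : Monotone fun n => E (w n) v :=
    monotone_int_of_le_succ fun n h => (hdir _).resolve_right (hbetween n h)
  have hfin : {n | E (w n) v}.Finite ∨ {n | ¬ E (w n) v}.Finite :=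
    h_deg.imp (·.preimage h_inj.injOn)
      fun h => (h.preimage h_inj.injOn).subset fun n hn => (hdir n).resolve_left hn
  rcases hmono.forall_or_forall_not hfin with hin | hout
  · exact canBeInserted_of_forall_in h_inj h_ray hv hin (h_sc v (w 0))
  · exact canBeInserted_of_forall_out h_inj h_ray hv (fun n => (hdir n).resolve_left (hout n))
      (h_sc (w 0) v)

theorem stmt_2 {V : Type*} (E : V → V → Prop)
    (h_irr : ∀ v : V, ¬ E v v)
    (h_tour : ∀ u v : V, u ≠ v → Xor' (E u v) (E v u))
    (h_sc : ∀ u v : V, Relation.ReflTransGen E u v)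
    (w : ℤ → V) (h_inj : Function.Injective w)
    (h_ray : ∀ n : ℤ, E (w n) (w (n + 1)))
    (v : V) (hv : v ∉ Set.range w)
    (h_deg : {u : V | E u v}.Finite ∨ {u : V | E v u}.Finite) :
    ∃ (w' : ℤ → V) (i : ℤ) (k : ℕ),
      Function.Injective w' ∧ (∀ n : ℤ, E (w' n) (w' (n + 1))) ∧
      (∀ n : ℤ, n < i → w' n = w n) ∧
      (∀ n : ℤ, i ≤ n → w' (n + (k : ℤ)) = w n) ∧
      v ∈ Set.range w' :=
  stmt_2_general E h_tour h_sc w h_inj h_ray v hv h_deg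
end

section
/- Every solid tournament on a nonempty vertex type has a vertex that can reach every other vertex. -/
/-!
In a tournament any two vertices are comparable under reachability, so reachability is
directed (downwards). Solidity with `X = ∅` leaves finitely many strong components; a vertex
reaching a representative of each of them reaches every vertex.
-/

/-- Mutual reachability in `D − X`: `u` and `v` lie in the same strong component
of the restriction of `E` to the complement of `X`. -/
def SameComp {V : Type*} (E : V → V → Prop) (X : Set V) (u v : V) : Prop :=
  Relation.ReflTransGen (fun a b => a ∉ X ∧ b ∉ X ∧ E a b) u v ∧
  Relation.ReflTransGen (fun a b => a ∉ X ∧ b ∉ X ∧ E a b) v u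

/-- A digraph is solid if deleting any finite vertex set leaves only finitely many
strong components. -/
def IsSolid {V : Type*} (E : V → V → Prop) : Prop :=
  ∀ X : Set V, X.Finite →
    {C : Set V | ∃ v, v ∉ X ∧ C = {u | u ∉ X ∧ SameComp E X u v}}.Finite

open Relation

section

variable {V : Type*} {E : V → V → Prop}

lemma SameComp.reflTransGen_of_empty {u v : V} (h : SameComp E ∅ u v) : ReflTransGen E v u :=
  ReflTransGen.mono (fun _ _ hab => hab.2.2) _ _ h.2

lemma IsSolid.exists_finset_sameComp (h : IsSolid E) :
    ∃ S : Finset V, ∀ w, ∃ s ∈ S, SameComp E ∅ w s := by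
  classical
  set comp : V → Set V := fun v => {u | u ∉ (∅ : Set V) ∧ SameComp E ∅ u v}
  have hfin : (Set.range comp).Finite :=
    (h ∅ Set.finite_empty).subset <| by
      rintro C ⟨v, rfl⟩
      exact ⟨v, Set.notMem_empty v, rfl⟩
  obtain ⟨S, -, hS⟩ := Finset.subset_set_image_iff.1
    (show ↑hfin.toFinset ⊆ comp '' Set.univ by simp)
  refine ⟨S, fun w => ?_⟩
  have hw : comp w ∈ S.image comp := by simp [hS]
  obtain ⟨s, hsS, hsw⟩ := Finset.mem_image.1 hw
  have hw_mem : w ∈ comp s := hsw ▸ ⟨Set.notMem_empty w, .refl, .refl⟩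
  exact ⟨s, hsS, hw_mem.2⟩

lemma directed_swap_reflTransGen (htot : ∀ u v : V, u ≠ v → E u v ∨ E v u) :
    Directed (Function.swap (ReflTransGen E)) id := by
  intro u v
  rcases eq_or_ne u v with rfl | huv
  · exact ⟨u, .refl, .refl⟩
  rcases htot u v huv with h | h
  · exact ⟨u, .refl, .single h⟩
  · exact ⟨v, .single h, .refl⟩

end

theorem stmt_3_general {V : Type*} [Nonempty V] (E : V → V → Prop)
    (h_tour : ∀ u v : V, u ≠ v → Xor' (E u v) (E v u))
    (h_solid : IsSolid E) :
    ∃ v : V, ∀ w : V, Relation.ReflTransGen E v w := by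
  obtain ⟨S, hS⟩ := h_solid.exists_finset_sameComp
  have hdir := directed_swap_reflTransGen fun u v huv => Xor.or (h_tour u v huv)
  obtain ⟨z, hz⟩ := hdir.finset_le S
  refine ⟨z, fun w => ?_⟩
  obtain ⟨s, hsS, hws⟩ := hS w
  exact (hz s hsS).trans hws.reflTransGen_of_empty

theorem stmt_3 {V : Type*} [Nonempty V] (E : V → V → Prop)
    (h_irr : ∀ v : V, ¬ E v v)
    (h_tour : ∀ u v : V, u ≠ v → Xor' (E u v) (E v u))
    (h_solid : IsSolid E) :
    ∃ v : V, ∀ w : V, Relation.ReflTransGen E v w :=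
  stmt_3_general E h_tour h_solid
end

section
/- Every solid digraph on a countably infinite vertex type contains a ray. -/
open Relation List

section Paths

variable {α : Type*}

theorem exists_isChain_cons_nodup_first_mem {r : α → α → Prop} {S : Set α} {a b : α}
    (hab : ReflTransGen r a b) (hb : b ∈ S) :
    ∃ l s, (a :: l).IsChain r ∧ (a :: l).Nodup ∧ (a :: l).getLast? = some s ∧ s ∈ S ∧
      ∀ x ∈ a :: l, x ∈ S → x = s := by
  induction hab using ReflTransGen.head_induction_on with
  | refl =>
    exact ⟨[], b, .singleton b, nodup_singleton b, rfl, hb, fun x hx _ => mem_singleton.1 hx⟩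
  | @head a c hac _ ih =>
    obtain ⟨l, s, hchain, hnodup, hlast, hs, hfirst⟩ := ih
    by_cases haS : a ∈ S
    · exact ⟨[], a, .singleton a, nodup_singleton a, rfl, haS, fun x hx _ => mem_singleton.1 hx⟩
    by_cases hal : a ∈ c :: l
    · obtain ⟨l₁, l₂, hsplit⟩ := append_of_mem hal
      have hsuf : a :: l₂ <:+ c :: l := hsplit ▸ suffix_append l₁ (a :: l₂)
      refine ⟨l₂, s, hchain.suffix hsuf, hnodup.sublist hsuf.sublist, ?_, hs,
        fun x hx => hfirst x (hsuf.subset hx)⟩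
      rw [← hlast, hsplit, getLast?_append_of_ne_nil _ (cons_ne_nil _ _)]
    · refine ⟨c :: l, s, hchain.cons_cons hac, nodup_cons.2 ⟨hal, hnodup⟩, hlast, hs, ?_⟩
      rintro x (_ | ⟨_, hx⟩) hxS
      · exact absurd hxS haS
      · exact hfirst x hx hxS

theorem exists_seq_ofFn_prefix {p : List α → Prop} {P₀ : List α} (h₀ : p P₀)
    (hext : ∀ P, p P → ∃ Q, p Q ∧ P <+: Q ∧ P.length < Q.length) :
    ∃ r : ℕ → α, ∀ n, ∃ P, p P ∧ ofFn (fun i : Fin n => r i) <+: P := by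
  choose f hfp hfpre hflen using fun P : Subtype p => hext P.1 P.2
  let g : Subtype p → Subtype p := fun P => ⟨f P, hfp P⟩
  let Q : ℕ → List α := fun n => (g^[n] ⟨P₀, h₀⟩).1
  have hstep : ∀ n, Q n <+: Q (n + 1) ∧ (Q n).length < (Q (n + 1)).length := fun n => by
    simp only [Q, Function.iterate_succ_apply']
    exact ⟨hfpre _, hflen _⟩
  have hlen : ∀ n, n ≤ (Q n).length := fun n => by
    induction n with
    | zero => exact Nat.zero_le _
    | succ n ih => exact (hstep n).2.trans_le' ih
  have hmono : ∀ {m n}, m ≤ n → Q m <+: Q n := fun hmn => by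
    induction hmn with
    | refl => exact prefix_refl _
    | step _ ih => exact ih.trans (hstep _).1
  refine ⟨fun n => (Q (n + 1))[n]'(hlen (n + 1)), fun n => ⟨Q n, (g^[n] _).2, ?_⟩⟩
  have htake : ofFn (fun i : Fin n => (Q (i + 1))[i.1]'(hlen (i + 1))) = (Q n).take n :=
    ext_getElem (by simp [hlen n]) fun i _ _ => by
      simpa using (hmono (show i + 1 ≤ n by simp_all)).getElem _
  exact htake ▸ take_prefix n _

theorem exists_ray_of_extend {E : α → α → Prop} {p : List α → Prop}
    (hp : ∀ P, p P → P.IsChain E ∧ P.Nodup) {P₀ : List α} (h₀ : p P₀)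
    (hext : ∀ P, p P → ∃ Q, p Q ∧ P <+: Q ∧ P.length < Q.length) :
    ∃ r : ℕ → α, Function.Injective r ∧ ∀ n, E (r n) (r (n + 1)) := by
  obtain ⟨r, hr⟩ := exists_seq_ofFn_prefix h₀ hext
  have hpath : ∀ n, (ofFn fun i : Fin n => r i).IsChain E ∧ (ofFn fun i : Fin n => r i).Nodup :=
    fun n => by
      obtain ⟨P, hP, hpre⟩ := hr n
      exact ⟨(hp P hP).1.infix hpre.isInfix, (hp P hP).2.sublist hpre.sublist⟩
  refine ⟨r, fun a b hab => ?_, fun n => isChain_ofFn.1 (hpath (n + 2)).1 n (by omega)⟩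
  have := nodup_ofFn.1 (hpath (max a b + 1)).2 (a₁ := ⟨a, by omega⟩) (a₂ := ⟨b, by omega⟩) hab
  exact congrArg Fin.val this

end Paths

section Digraph

variable {V : Type*} {E : V → V → Prop} {X : Set V} {u v w : V}

theorem SameComp.symm (h : SameComp E X u v) : SameComp E X v u := ⟨h.2, h.1⟩

theorem SameComp.trans (huv : SameComp E X u v) (hvw : SameComp E X v w) : SameComp E X u w :=
  ⟨huv.1.trans hvw.1, hvw.2.trans huv.2⟩

def strongComp (E : V → V → Prop) (X : Set V) (v : V) : Set V := {u | u ∉ X ∧ SameComp E X u v}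

theorem mem_strongComp_self (hv : v ∉ X) : v ∈ strongComp E X v := ⟨hv, .refl, .refl⟩

theorem strongComp_eq_of_mem (hu : u ∈ strongComp E X v) : strongComp E X u = strongComp E X v :=
  Set.ext fun _ => and_congr_right fun _ => ⟨fun h => h.trans hu.2, fun h => h.trans hu.2.symm⟩

theorem SameComp.reflTransGen_strongComp (h : SameComp E X u v) :
    ReflTransGen (fun a b => b ∈ strongComp E X v ∧ E a b) v u := by
  obtain ⟨hback, hforth⟩ := h
  induction hforth with
  | refl => exact .refl
  | tail hvc hcd ih => exact (ih (.head hcd hback)).tail ⟨⟨hcd.2.1, hback, hvc.tail hcd⟩, hcd.2.2⟩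

theorem IsSolid.exists_infinite_strongComp (hsolid : IsSolid E) (hX : X.Finite) {S : Set V}
    (hS : S.Infinite) : ∃ u ∈ S, u ∉ X ∧ (strongComp E X u).Infinite := by
  by_contra! hfin
  have hcomps : (strongComp E X '' (S \ X)).Finite :=
    (hsolid X hX).subset fun _ ⟨u, hu, hC⟩ => ⟨u, hu.2, hC.symm⟩
  refine (hS.sdiff hX) ((hcomps.sUnion ?_).subset fun u hu => ?_)
  · rintro _ ⟨u, hu, rfl⟩
    exact hfin u hu.1 hu.2
  · exact Set.mem_sUnion.2 ⟨_, ⟨u, hu, rfl⟩, mem_strongComp_self hu.2⟩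

end Digraph

section Ray

variable {V : Type*} {E : V → V → Prop}

def IsPathToInfiniteComp (E : V → V → Prop) (P : List V) : Prop :=
  P.IsChain E ∧ P.Nodup ∧ ∃ X w, X.Finite ∧ P.getLast? = some w ∧
    (strongComp E X w).Infinite ∧ ∀ x ∈ P, x ∈ strongComp E X w → x = w

theorem IsSolid.exists_isPathToInfiniteComp_singleton [Infinite V] (hsolid : IsSolid E) :
    ∃ v, IsPathToInfiniteComp E [v] := by
  obtain ⟨v, -, -, hinf⟩ := hsolid.exists_infinite_strongComp Set.finite_empty Set.infinite_univ
  exact ⟨v, .singleton v, nodup_singleton v, ∅, v, Set.finite_empty, rfl, hinf,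
    fun x hx _ => mem_singleton.1 hx⟩

theorem IsPathToInfiniteComp.exists_extend (hsolid : IsSolid E) {P : List V}
    (hP : IsPathToInfiniteComp E P) :
    ∃ Q, IsPathToInfiniteComp E Q ∧ P <+: Q ∧ P.length < Q.length := by
  obtain ⟨hchain, hnodup, X, w, hX, hlast, hinf, hPC⟩ := hP
  set C := strongComp E X w
  set X' := X ∪ {x | x ∈ P}
  have hX' : X'.Finite := hX.union P.finite_toSet
  obtain ⟨u, huC, huX', hinf'⟩ := hsolid.exists_infinite_strongComp hX' hinf
  obtain ⟨l, s, hl, hlnodup, hls, hsC', hfirst⟩ :=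
    exists_isChain_cons_nodup_first_mem huC.2.reflTransGen_strongComp (mem_strongComp_self huX')
  have hwX' : w ∈ X' := Or.inr (mem_of_getLast? hlast)
  have hl_ne : l ≠ [] := by
    rintro rfl
    cases hls
    exact hsC'.1 hwX'
  have hlC : ∀ x ∈ l, x ∈ C := fun x hx => by
    obtain ⟨i, hi, rfl⟩ := mem_iff_getElem.1 hx
    exact (isChain_iff_getElem.1 hl i (by simpa using hi)).1
  have hlE : (w :: l).IsChain E := hl.imp fun _ _ h => h.2
  rw [← strongComp_eq_of_mem hsC'] at hinf' hfirst
  refine ⟨P ++ l, ⟨?_, ?_, X', s, hX', ?_, hinf', ?_⟩, prefix_append P l, ?_⟩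
  · refine hchain.append hlE.tail fun x hx y hy => ?_
    cases hlast.symm.trans hx
    exact isChain_cons.1 hlE |>.1 y hy
  · refine nodup_append.2 ⟨hnodup, (nodup_cons.1 hlnodup).2, fun x hx y hy hxy => ?_⟩
    subst hxy
    exact (nodup_cons.1 hlnodup).1 (hPC x hx (hlC x hy) ▸ hy)
  · rw [getLast?_append_of_ne_nil _ hl_ne, ← hls, getLast?_cons_of_ne_nil hl_ne]
  · rintro x hx hxC'
    rcases mem_append.1 hx with hxP | hxl
    · exact absurd (Or.inr hxP) hxC'.1
    · exact hfirst x (mem_cons_of_mem w hxl) hxC'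
  · simpa using length_pos_iff.2 hl_ne

end Ray

theorem stmt_5_general {V : Type*} [Infinite V] (E : V → V → Prop)
    (h_solid : IsSolid E) :
    ∃ r : ℕ → V, Function.Injective r ∧ ∀ n : ℕ, E (r n) (r (n + 1)) := by
  obtain ⟨v, hv⟩ := h_solid.exists_isPathToInfiniteComp_singleton
  exact exists_ray_of_extend (fun P hP => ⟨hP.1, hP.2.1⟩) hv fun P hP => hP.exists_extend h_solid

theorem stmt_5 {V : Type*} [Countable V] [Infinite V] (E : V → V → Prop)
    (h_irr : ∀ v : V, ¬ E v v)
    (h_solid : IsSolid E) :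
    ∃ r : ℕ → V, Function.Injective r ∧ ∀ n : ℕ, E (r n) (r (n + 1)) :=
  stmt_5_general E h_solid
end

section
/- In a solid digraph every ray is solid: if D is a solid digraph and r is a ray in D, then for every finite set X of vertices there is an N such that all the vertices r n with n ≥ N lie outside X and in a single strong component of D − X. -/
/-!
An injective ray meets the finite set `X` only finitely often, so its tail lives in `D − X`.
Since `D − X` has finitely many strong components, by pigeonhole the tail visits one of them,
say the component of `v`, infinitely often. Every tail vertex `r m` then lies in that component:
the ray leads forward from `r m` to a later visit `r b`, and back from `v` via an earlier visit.
-/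

open Filter

section

variable {V : Type*} {E : V → V → Prop} {X : Set V}

theorem SameComp.equivalence : Equivalence (SameComp E X) where
  refl _ := ⟨.refl, .refl⟩
  symm h := ⟨h.2, h.1⟩
  trans h₁ h₂ := ⟨h₁.1.trans h₂.1, h₂.2.trans h₁.2⟩

theorem reflTransGen_of_tail_succ {R : V → V → Prop} {f : ℕ → V} {N m n : ℕ}
    (h : ∀ k, N ≤ k → R (f k) (f (k + 1))) (hNm : N ≤ m) (hmn : m ≤ n) :
    Relation.ReflTransGen R (f m) (f n) :=
  (reflTransGen_of_succ_of_le (fun i j => R (f i) (f j))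
    (fun i hi => by simpa using h i (hNm.trans hi.1)) hmn).lift f fun _ _ => id

theorem IsSolid.exists_frequently_sameComp (h_solid : IsSolid E) (hX : X.Finite)
    {l : Filter ℕ} [l.NeBot] {f : ℕ → V} (hf : ∀ᶠ n in l, f n ∉ X) :
    ∃ v, ∃ᶠ n in l, SameComp E X (f n) v := by
  have hvisit : ∃ᶠ n in l,
      ∃ C ∈ {C : Set V | ∃ v, v ∉ X ∧ C = {u | u ∉ X ∧ SameComp E X u v}}, f n ∈ C :=
    (hf.mono fun n hn => ⟨_, ⟨f n, hn, rfl⟩, hn, SameComp.equivalence.refl _⟩).frequently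
  obtain ⟨_, ⟨v, -, rfl⟩, hv⟩ := (h_solid X hX).frequently_exists.1 hvisit
  exact ⟨v, hv.mono fun _ hn => hn.2⟩

theorem eventually_sameComp_of_frequently {r : ℕ → V} {N : ℕ} {v : V}
    (h_ray : ∀ n, E (r n) (r (n + 1))) (hout : ∀ n, N ≤ n → r n ∉ X)
    (hfreq : ∃ᶠ n in atTop, SameComp E X (r n) v) :
    ∀ᶠ n in atTop, SameComp E X (r n) v := by
  have hpath : ∀ m n, N ≤ m → m ≤ n →
      Relation.ReflTransGen (fun a b => a ∉ X ∧ b ∉ X ∧ E a b) (r m) (r n) :=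
    fun m n => reflTransGen_of_tail_succ fun k hk => ⟨hout k hk, hout (k + 1) (by omega), h_ray k⟩
  obtain ⟨a, ha, hNa⟩ := (hfreq.and_eventually (eventually_ge_atTop N)).exists
  filter_upwards [eventually_ge_atTop a] with m ham
  obtain ⟨b, hb, hmb⟩ := (hfreq.and_eventually (eventually_ge_atTop m)).exists
  exact ⟨(hpath m b (hNa.trans ham) hmb).trans hb.1, ha.2.trans (hpath a m hNa ham)⟩

end

theorem stmt_6_general {V : Type*} (E : V → V → Prop)
    (h_solid : IsSolid E)
    (r : ℕ → V) (h_inj : Function.Injective r)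
    (h_ray : ∀ n : ℕ, E (r n) (r (n + 1)))
    (X : Set V) (hX : X.Finite) :
    ∃ N : ℕ, (∀ n : ℕ, N ≤ n → r n ∉ X) ∧
      (∀ m n : ℕ, N ≤ m → N ≤ n → SameComp E X (r m) (r n)) := by
  have hout : ∀ᶠ n in atTop, r n ∉ X :=
    Nat.cofinite_eq_atTop ▸ h_inj.tendsto_cofinite hX.compl_mem_cofinite
  obtain ⟨N, hN⟩ := eventually_atTop.1 hout
  obtain ⟨v, hv⟩ := h_solid.exists_frequently_sameComp hX hout
  obtain ⟨M, hM⟩ := eventually_atTop.1 (eventually_sameComp_of_frequently h_ray hN hv)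
  refine ⟨max N M, fun n hn => hN n (le_of_max_le_left hn), fun m n hm hn => ?_⟩
  exact SameComp.equivalence.trans (hM m (le_of_max_le_right hm))
    (SameComp.equivalence.symm (hM n (le_of_max_le_right hn)))

theorem stmt_6 {V : Type*} (E : V → V → Prop)
    (h_irr : ∀ v : V, ¬ E v v)
    (h_solid : IsSolid E)
    (r : ℕ → V) (h_inj : Function.Injective r)
    (h_ray : ∀ n : ℕ, E (r n) (r (n + 1)))
    (X : Set V) (hX : X.Finite) :
    ∃ N : ℕ, (∀ n : ℕ, N ≤ n → r n ∉ X) ∧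
      (∀ m n : ℕ, N ≤ m → N ≤ n → SameComp E X (r m) (r n)) :=
  stmt_6_general E h_solid r h_inj h_ray X hX
end

section
/- The tournament D₀ has no spanning ray: there is no injective map r : ℕ → V₀ with E₀ (r n) (r (n+1)) for all n whose image is all of V₀. -/
/-!
Every edge of `D₀` goes weakly up in the branch index, so along a ray the branch index is
monotone. Once a ray has reached `(1, 0)` it never returns to branch `0`, so it visits only
finitely many of the infinitely many vertices `(0, k)`.
-/

/-- The edge relation of the counterexample tournament `D₀` on `Fin 3 × ℕ`:
edges go up in branch index; within a branch, to the immediate successor,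
or back down by at least two. -/
def E₀ : Fin 3 × ℕ → Fin 3 × ℕ → Prop := fun p q =>
  p.1 < q.1 ∨ (p.1 = q.1 ∧ q.2 = p.2 + 1) ∨ (p.1 = q.1 ∧ p.2 ≥ q.2 + 2)

theorem E₀.fst_le {p q : Fin 3 × ℕ} (h : E₀ p q) : p.1 ≤ q.1 := by
  rcases h with h | ⟨h, -⟩ | ⟨h, -⟩ <;> exact h.le

theorem Monotone.finite_setOf_lt {α : Type*} [Preorder α] {f : ℕ → α} (hf : Monotone f)
    (N : ℕ) : {n | f n < f N}.Finite :=
  (Set.finite_Iio N).subset fun _ hn => lt_of_not_ge fun hNn => (hf hNn).not_gt hn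

theorem infinite_setOf_fst_lt {α : Type*} [Preorder α] {a b : α} (hba : b < a) :
    {p : α × ℕ | p.1 < a}.Infinite :=
  Set.infinite_of_injective_forall_mem (f := fun k : ℕ => (b, k))
    (fun _ _ h => (Prod.mk.inj h).2) fun _ => hba

theorem stmt_10 :
    ¬ ∃ r : ℕ → Fin 3 × ℕ, Function.Injective r ∧
      (∀ n : ℕ, E₀ (r n) (r (n + 1))) ∧ Set.range r = Set.univ := by
  rintro ⟨r, -, hE, hrange⟩
  have hsurj : Function.Surjective r := Set.range_eq_univ.mp hrange
  have hmono : Monotone fun n => (r n).1 := monotone_nat_of_le_succ fun n => (hE n).fst_le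
  obtain ⟨N, hN⟩ := hsurj (1, 0)
  have hfinite : {p : Fin 3 × ℕ | p.1 < 1}.Finite := by
    have hbefore : (r ⁻¹' {p | p.1 < 1}).Finite := by
      simpa only [hN, Set.preimage_ofPred_eq] using hmono.finite_setOf_lt N
    exact hbefore.of_preimage hsurj
  exact infinite_setOf_fst_lt Fin.zero_lt_one hfinite
end

section
/- The tournament D₀ has no spanning reverse ray: there is no injective map r : ℕ → V₀ with E₀ (r (n+1)) (r n) for all n whose image is all of V₀. -/
theorem not_surjective_of_fst_eventually_eq {α β : Type*} [Infinite β] {r : ℕ → α × β}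
    {i j : α} {N : ℕ} (hji : j ≠ i) (h : ∀ n, N ≤ n → (r n).1 = i) :
    ¬ Function.Surjective r := by
  intro hr
  apply Set.infinite_range_of_injective (Prod.mk_right_injective (β := β) j)
  refine ((Set.finite_Iio N).image r).subset ?_
  rintro _ ⟨b, rfl⟩
  obtain ⟨n, hn⟩ := hr (j, b)
  refine ⟨n, Set.mem_Iio.mpr (not_le.mp fun hNn => hji ?_), hn⟩
  simpa [hn] using h n hNn

theorem stmt_11 :
    ¬ ∃ r : ℕ → Fin 3 × ℕ, Function.Injective r ∧
      (∀ n : ℕ, E₀ (r (n + 1)) (r n)) ∧ Set.range r = Set.univ := by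
  rintro ⟨r, -, hE, hrange⟩
  have hanti : Antitone fun n => (r n).1 := antitone_nat_of_succ_le fun n => (hE n).fst_le
  obtain ⟨N, hN⟩ := WellFoundedLT.antitone_chain_condition hanti
  exact not_surjective_of_fst_eventually_eq (j := (r N).1 + 1) (add_eq_left.not.mpr one_ne_zero)
    (fun n hn => (hN n hn).symm) (Set.range_eq_univ.mp hrange)
end

section
/- Every ray of D₀ whose image contains a vertex of branch B₀ and a vertex of branch B₂ contains only finitely many vertices of branch B₁, and the same holds for every double ray of D₀. -/
theorem stmt_13 :
    (∀ r : ℕ → Fin 3 × ℕ, Function.Injective r →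
      (∀ n : ℕ, E₀ (r n) (r (n + 1))) →
      (∃ m : ℕ, (r m).1 = 0) → (∃ m : ℕ, (r m).1 = 2) →
      {n : ℕ | (r n).1 = 1}.Finite) ∧
    (∀ w : ℤ → Fin 3 × ℕ, Function.Injective w →
      (∀ n : ℤ, E₀ (w n) (w (n + 1))) →
      (∃ m : ℤ, (w m).1 = 0) → (∃ m : ℤ, (w m).1 = 2) →
      {n : ℤ | (w n).1 = 1}.Finite) := by
  constructor
  · rintro r - hE - ⟨m₂, hm₂⟩
    have hmono : Monotone fun n => (r n).1 := monotone_nat_of_le_succ fun n => (hE n).fst_le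
    refine (Set.finite_Iio m₂).subset fun n (hn : (r n).1 = 1) => hmono.reflect_lt ?_
    simp only [hn, hm₂]
    decide
  · rintro w - hE ⟨m₀, hm₀⟩ ⟨m₂, hm₂⟩
    have hmono : Monotone fun n => (w n).1 := monotone_int_of_le_succ fun n => (hE n).fst_le
    refine (Set.finite_Ioo m₀ m₂).subset fun n (hn : (w n).1 = 1) =>
      ⟨hmono.reflect_lt ?_, hmono.reflect_lt ?_⟩ <;>
    · simp only [hn, hm₀, hm₂]
      decide
end

section
/- Let D be a digraph on a countable vertex type and let r be a vertex that can reach every other vertex of D. Then D has a normal spanning arborescence rooted at r. -/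
/-- `T` is a spanning arborescence of the digraph `E` rooted at `root`. -/
def IsSpanningArborescence {V : Type*} (E T : V → V → Prop) (root : V) : Prop :=
  (∀ u v : V, T u v → E u v) ∧
  (∀ u : V, ¬ T u root) ∧
  (∀ v : V, v ≠ root → ∃! u : V, T u v) ∧
  (∀ v : V, Relation.ReflTransGen T root v)

/-- The normal assistant of `T` in `E`: the tree edges of `T` together with an
edge `(v, w)` for every two tree-incomparable vertices `v, w` such that `E` has
an edge from the up-closure of `v` to the up-closure of `w`. -/
def NormalAssistant {V : Type*} (E T : V → V → Prop) : V → V → Prop := fun v w =>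
  T v w ∨
    (¬ Relation.ReflTransGen T v w ∧ ¬ Relation.ReflTransGen T w v ∧
      ∃ v' w' : V, Relation.ReflTransGen T v v' ∧ Relation.ReflTransGen T w w' ∧ E v' w')

/-- `T` is normal in `E` if its normal assistant is acyclic. -/
def IsNormal {V : Type*} (E T : V → V → Prop) : Prop :=
  Irreflexive (Relation.TransGen (NormalAssistant E T))

/-! Think of the construction as a depth-first search that never gets lost down an infinite
branch. At each finite stage the placed vertices form a tree whose vertices own nested rational
intervals, and every edge between incomparable branches points to an interval further left, so
the right end point `hi` strictly decreases along every edge of the normal assistant. Every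
unplaced vertex waits below a placed anchor, and each anchor keeps free room to the right of its
children. To place a vertex `w`, hang the vertices of a path from its anchor to `w` one at a
time. Enumerating the countable vertex set, every vertex is placed at some stage. The stages
agree on placed vertices, so their union is a spanning arborescence on which `hi` is well
defined, and it is normal. -/

namespace Relation

variable {α : Type*} {r p : α → α → Prop} {a b c : α}

def ReachIn (r : α → α → Prop) : ℕ → α → α → Prop
  | 0 => Eq
  | n + 1 => fun a c => ∃ b, ReachIn r n a b ∧ r b c

theorem ReachIn.reflTransGen : ∀ {n : ℕ} {b : α}, ReachIn r n a b → ReflTransGen r a b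
  | 0, _, rfl => .refl
  | _ + 1, _, ⟨_, hab, hbc⟩ => hab.reflTransGen.tail hbc

theorem ReflTransGen.exists_reachIn (h : ReflTransGen r a b) : ∃ n, ReachIn r n a b := by
  induction h with
  | refl => exact ⟨0, rfl⟩
  | tail _ hbc ih =>
    obtain ⟨n, hn⟩ := ih
    exact ⟨n + 1, _, hn, hbc⟩

theorem ReachIn.head : ∀ {n : ℕ} {c : α}, ReachIn r (n + 1) a c → ∃ b, r a b ∧ ReachIn r n b c
  | 0, _, ⟨_, rfl, hac⟩ => ⟨_, hac, rfl⟩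
  | _ + 1, _, ⟨_, hab, hbc⟩ =>
    let ⟨d, had, hdb⟩ := hab.head
    ⟨d, had, _, hdb, hbc⟩

theorem ReachIn.exists_le_avoid_source :
    ∀ {n : ℕ} {b : α}, ReachIn r n a b → ∃ j ≤ n, ReachIn (fun x y => r x y ∧ y ≠ a) j a b
  | 0, _, h => ⟨0, le_rfl, h⟩
  | n + 1, c, ⟨b, hab, hbc⟩ => by
    by_cases hca : c = a
    · exact ⟨0, Nat.zero_le _, hca.symm⟩
    · obtain ⟨j, hj, hab'⟩ := hab.exists_le_avoid_source
      exact ⟨j + 1, by omega, b, hab', hbc, hca⟩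

theorem ReachIn.mono_of_reach (hrp : ∀ x y, ReflTransGen r a x → r x y → p x y) :
    ∀ {n : ℕ} {b : α}, ReachIn r n a b → ReachIn p n a b
  | 0, _, h => h
  | _ + 1, _, ⟨_, hab, hbc⟩ => ⟨_, hab.mono_of_reach hrp, hrp _ _ hab.reflTransGen hbc⟩

theorem ReflTransGen.avoid_source (h : ReflTransGen r a b) :
    ReflTransGen (fun x y => r x y ∧ y ≠ a) a b := by
  obtain ⟨n, hn⟩ := h.exists_reachIn
  obtain ⟨j, -, hj⟩ := hn.exists_le_avoid_source
  exact hj.reflTransGen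

theorem ReflTransGen.mono_of_reach (hrp : ∀ x y, ReflTransGen r a x → r x y → p x y)
    (h : ReflTransGen r a b) : ReflTransGen p a b := by
  obtain ⟨n, hn⟩ := h.exists_reachIn
  exact (hn.mono_of_reach hrp).reflTransGen

theorem ReflTransGen.avoid_of_closed {S : Set α} (hS : ∀ x y, x ∈ S → r x y → y ∈ S)
    (h : ReflTransGen r a b) (hb : b ∉ S) : ReflTransGen (fun x y => r x y ∧ y ∉ S) a b := by
  induction h with
  | refl => exact .refl
  | tail _ hcb ih => exact (ih fun hc => hb (hS _ _ hc hcb)).tail ⟨hcb, hb⟩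

theorem ReflTransGen.total_of_left_unique (hr : Relator.LeftUnique r)
    (hac : ReflTransGen r a c) (hbc : ReflTransGen r b c) :
    ReflTransGen r a b ∨ ReflTransGen r b a := by
  have := ReflTransGen.total_of_right_unique (r := Function.swap r) (fun _ _ _ h₁ h₂ => hr h₁ h₂)
    (reflTransGen_swap.2 hac) (reflTransGen_swap.2 hbc)
  exact (this.imp reflTransGen_swap.1 reflTransGen_swap.1).symm

theorem TransGen.lt_of_forall_lt {β : Type*} [Preorder β] {g : α → β}
    (hg : ∀ a b, r a b → g b < g a) (h : TransGen r a b) : g b < g a := by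
  induction h with
  | single hab => exact hg _ _ hab
  | tail _ hbc ih => exact (hg _ _ hbc).trans ih

end Relation

open Relation

/-- A stage of the construction. The placed vertices form a tree via `parent`, and each placed
`v` owns the rational interval `(lo v, hi v)`: intervals are nested along the tree and disjoint
for incomparable vertices, and an edge between placed vertices either stays in one branch or
points to an interval further left. Children of `v` placed so far sit left of `slot v`; later
ones go into `(slot v, hi v)`. An unplaced `u` is waiting to be hung below `anchor u`, from which
it is reachable through unplaced vertices with the same anchor. -/
structure Stage (V : Type*) where
  placed : Set V
  parent : V → V
  lo : V → ℚ
  hi : V → ℚ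
  slot : V → ℚ
  anchor : V → V

namespace Stage

variable {V : Type*}

def TreeEdge (root : V) (s : Stage V) (a b : V) : Prop :=
  b ∈ s.placed ∧ b ≠ root ∧ s.parent b = a

def TreeLE (root : V) (s : Stage V) : V → V → Prop := ReflTransGen (s.TreeEdge root)

def GroupEdge (E : V → V → Prop) (s : Stage V) (m a b : V) : Prop :=
  E a b ∧ b ∉ s.placed ∧ s.anchor b = m

structure Valid (E : V → V → Prop) (root : V) (s : Stage V) : Prop where
  root_mem : root ∈ s.placed
  parent_mem : ∀ v ∈ s.placed, v ≠ root → s.parent v ∈ s.placed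
  edge_parent : ∀ v ∈ s.placed, v ≠ root → E (s.parent v) v
  lo_parent_lt : ∀ v ∈ s.placed, v ≠ root → s.lo (s.parent v) < s.lo v
  hi_lt_parent : ∀ v ∈ s.placed, v ≠ root → s.hi v < s.hi (s.parent v)
  hi_le_slot_parent : ∀ v ∈ s.placed, v ≠ root → s.hi v ≤ s.slot (s.parent v)
  lo_lt_hi : ∀ v ∈ s.placed, s.lo v < s.hi v
  root_le : ∀ v ∈ s.placed, s.TreeLE root root v
  disjoint : ∀ a ∈ s.placed, ∀ b ∈ s.placed, ¬ s.TreeLE root a b → ¬ s.TreeLE root b a →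
    s.hi a < s.lo b ∨ s.hi b < s.lo a
  edge_placed : ∀ a ∈ s.placed, ∀ b ∈ s.placed, E a b →
    s.TreeLE root a b ∨ s.TreeLE root b a ∨ s.hi b < s.lo a
  anchor_mem : ∀ u ∉ s.placed, s.anchor u ∈ s.placed
  lo_le_slot : ∀ u ∉ s.placed, s.lo (s.anchor u) ≤ s.slot (s.anchor u)
  slot_lt_hi : ∀ u ∉ s.placed, s.slot (s.anchor u) < s.hi (s.anchor u)
  reach : ∀ u ∉ s.placed, ReflTransGen (s.GroupEdge E (s.anchor u)) (s.anchor u) u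
  edge_to_unplaced : ∀ u ∉ s.placed, ∀ z ∈ s.placed, E z u →
    s.TreeLE root z (s.anchor u) ∨ s.hi (s.anchor u) ≤ s.lo z
  edge_from_unplaced : ∀ u ∉ s.placed, ∀ z ∈ s.placed, E u z →
    s.TreeLE root z (s.anchor u) ∨ s.hi z ≤ s.slot (s.anchor u)
  edge_unplaced : ∀ u ∉ s.placed, ∀ u' ∉ s.placed, s.anchor u ≠ s.anchor u' → E u u' →
    s.hi (s.anchor u') ≤ s.slot (s.anchor u)
  anchor_position : ∀ u ∉ s.placed, ∀ z ∈ s.placed, s.TreeLE root z (s.anchor u) ∨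
    s.hi z ≤ s.slot (s.anchor u) ∨ s.hi (s.anchor u) ≤ s.lo z

variable {E : V → V → Prop} {root : V} {s t : Stage V} {f : ℕ → Stage V} {a b u v w x z : V}
  {q₁ q₂ : ℚ}

theorem TreeEdge.left_unique : Relator.LeftUnique (s.TreeEdge root) :=
  fun _ _ _ h₁ h₂ => h₁.2.2.symm.trans h₂.2.2

theorem TreeLE.total_of_le (hac : s.TreeLE root a v) (hbc : s.TreeLE root b v) :
    s.TreeLE root a b ∨ s.TreeLE root b a :=
  ReflTransGen.total_of_left_unique TreeEdge.left_unique hac hbc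

namespace Valid

variable (hs : s.Valid E root)
include hs

theorem mem_of_treeLE (h : s.TreeLE root a b) (hb : b ∈ s.placed) : a ∈ s.placed := by
  rcases h.cases_head with rfl | ⟨c, ⟨hc, hcr, rfl⟩, -⟩
  · exact hb
  · exact hs.parent_mem c hc hcr

theorem lo_le_lo_and_hi_le_hi (h : s.TreeLE root a b) : s.lo a ≤ s.lo b ∧ s.hi b ≤ s.hi a := by
  induction h with
  | refl => exact ⟨le_rfl, le_rfl⟩
  | tail _ hbc ih =>
    obtain ⟨hc, hcr, rfl⟩ := hbc
    exact ⟨ih.1.trans (hs.lo_parent_lt _ hc hcr).le, (hs.hi_lt_parent _ hc hcr).le.trans ih.2⟩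

theorem hi_le_slot_of_treeLE (h : s.TreeLE root a b) (hab : a ≠ b) : s.hi b ≤ s.slot a := by
  obtain ⟨c, ⟨hc, hcr, rfl⟩, hcb⟩ := h.cases_head.resolve_left hab
  exact (hs.lo_le_lo_and_hi_le_hi hcb).2.trans (hs.hi_le_slot_parent c hc hcr)

theorem hi_lt_hi_of_incomparable (hv : v ∈ s.placed) (hw : w ∈ s.placed) (hav : s.TreeLE root a v)
    (hbw : s.TreeLE root b w) (hE : E v w) (hab : ¬ s.TreeLE root a b)
    (hba : ¬ s.TreeLE root b a) : s.hi b < s.hi a := by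
  have hcmp : ¬ (s.TreeLE root a b ∨ s.TreeLE root b a) := by tauto
  rcases hs.edge_placed v hv w hw hE with hvw | hwv | hwv
  · exact absurd (TreeLE.total_of_le (hav.trans hvw) hbw) hcmp
  · exact absurd (TreeLE.total_of_le hav (hbw.trans hwv)) hcmp
  have ⟨hav₁, hav₂⟩ := hs.lo_le_lo_and_hi_le_hi hav
  have ⟨hbw₁, hbw₂⟩ := hs.lo_le_lo_and_hi_le_hi hbw
  have := hs.lo_lt_hi v hv
  have := hs.lo_lt_hi w hw
  have := hs.lo_lt_hi a (hs.mem_of_treeLE hav hv)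
  rcases hs.disjoint a (hs.mem_of_treeLE hav hv) b (hs.mem_of_treeLE hbw hw) hab hba with h | h
  · linarith
  · linarith

end Valid

def Extends (s t : Stage V) : Prop :=
  s.placed ⊆ t.placed ∧ ∀ v ∈ s.placed, t.parent v = s.parent v ∧ t.hi v = s.hi v

theorem Extends.refl (s : Stage V) : s.Extends s := ⟨subset_rfl, fun _ _ => ⟨rfl, rfl⟩⟩

theorem Extends.trans {r : Stage V} (hst : s.Extends t) (htr : t.Extends r) : s.Extends r :=
  ⟨hst.1.trans htr.1, fun v hv => ⟨(htr.2 v (hst.1 hv)).1.trans (hst.2 v hv).1,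
    (htr.2 v (hst.1 hv)).2.trans (hst.2 v hv).2⟩⟩

theorem Extends.treeLE (h : s.Extends t) (hab : s.TreeLE root a b) : t.TreeLE root a b :=
  ReflTransGen.mono (fun _ c ⟨hc, hcr, hpar⟩ => ⟨h.1 hc, hcr, (h.2 c hc).1.trans hpar⟩) _ _ hab

def init (root : V) : Stage V where
  placed := {root}
  parent _ := root
  lo _ := 0
  hi _ := 1
  slot _ := 0
  anchor _ := root

theorem valid_init (hreach : ∀ v, ReflTransGen E root v) : (init root).Valid E root where
  root_mem := rfl
  parent_mem _ hv hvr := absurd hv hvr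
  edge_parent _ hv hvr := absurd hv hvr
  lo_parent_lt _ hv hvr := absurd hv hvr
  hi_lt_parent _ hv hvr := absurd hv hvr
  hi_le_slot_parent _ hv hvr := absurd hv hvr
  lo_lt_hi _ _ := zero_lt_one
  root_le _ hv := hv ▸ .refl
  disjoint _ ha _ hb hab _ := absurd (ha.trans hb.symm ▸ .refl) hab
  edge_placed _ ha _ hb _ := .inl (ha.trans hb.symm ▸ .refl)
  anchor_mem _ _ := rfl
  lo_le_slot _ _ := le_rfl
  slot_lt_hi _ _ := zero_lt_one
  reach u _ := ReflTransGen.mono (fun _ _ h => ⟨h.1, h.2, rfl⟩) _ _ (hreach u).avoid_source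
  edge_to_unplaced _ _ _ hz _ := .inl (hz ▸ .refl)
  edge_from_unplaced _ _ _ hz _ := .inl (hz ▸ .refl)
  edge_unplaced _ _ _ _ hne _ := absurd rfl hne
  anchor_position _ _ _ hz := .inl (hz ▸ .refl)

open Classical

def adopted (E : V → V → Prop) (s : Stage V) (u : V) : Set V :=
  {x | ReflTransGen (fun a b => s.GroupEdge E (s.anchor u) a b ∧ b ≠ u) u x ∧ x ≠ u}

noncomputable def place (E : V → V → Prop) (s : Stage V) (u : V) (q₁ q₂ : ℚ) : Stage V where
  placed := insert u s.placed
  parent := Function.update s.parent u (s.anchor u)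
  lo := Function.update s.lo u q₁
  hi := Function.update s.hi u q₂
  slot := Function.update (Function.update s.slot (s.anchor u) q₂) u q₁
  anchor x := if x ∈ s.adopted E u then u else s.anchor x

theorem mem_place : x ∈ (s.place E u q₁ q₂).placed ↔ x = u ∨ x ∈ s.placed := Set.mem_insert_iff

theorem not_mem_place : x ∉ (s.place E u q₁ q₂).placed ↔ x ≠ u ∧ x ∉ s.placed := by
  simp [mem_place]

@[simp] theorem place_parent :
    (s.place E u q₁ q₂).parent = Function.update s.parent u (s.anchor u) := rfl
@[simp] theorem place_lo : (s.place E u q₁ q₂).lo = Function.update s.lo u q₁ := rfl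
@[simp] theorem place_hi : (s.place E u q₁ q₂).hi = Function.update s.hi u q₂ := rfl
@[simp] theorem place_slot :
    (s.place E u q₁ q₂).slot = Function.update (Function.update s.slot (s.anchor u) q₂) u q₁ :=
  rfl

theorem place_anchor_of_adopted (hx : x ∈ s.adopted E u) : (s.place E u q₁ q₂).anchor x = u :=
  if_pos hx

theorem place_anchor_of_not_adopted (hx : x ∉ s.adopted E u) :
    (s.place E u q₁ q₂).anchor x = s.anchor x :=
  if_neg hx

theorem adopted_spec (hx : x ∈ s.adopted E u) :
    x ∉ s.placed ∧ x ≠ u ∧ s.anchor x = s.anchor u := by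
  obtain ⟨hpath, hxu⟩ := hx
  rcases hpath.cases_tail with rfl | ⟨_, -, ⟨-, hx, hxm⟩, -⟩
  · exact absurd rfl hxu
  · exact ⟨hx, hxu, hxm⟩

theorem mem_adopted_of_edge (hE : E u x) (hx : x ∉ s.placed) (hxu : x ≠ u)
    (hxm : s.anchor x = s.anchor u) : x ∈ s.adopted E u :=
  ⟨.single ⟨⟨hE, hx, hxm⟩, hxu⟩, hxu⟩

theorem mem_adopted_of_mem_of_edge (hv : v ∈ s.adopted E u) (hE : E v x) (hx : x ∉ s.placed) (hxu : x ≠ u)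
    (hxm : s.anchor x = s.anchor u) : x ∈ s.adopted E u :=
  ⟨hv.1.tail ⟨⟨hE, hx, hxm⟩, hxu⟩, hxu⟩

theorem GroupEdge.place {m m' y : V} (h : s.GroupEdge E m y z) (hzu : z ≠ u)
    (hz : (s.place E u q₁ q₂).anchor z = m') : (s.place E u q₁ q₂).GroupEdge E m' y z :=
  ⟨h.1, not_mem_place.2 ⟨hzu, h.2.1⟩, hz⟩

theorem groupEdge_place_of_avoid {y : V}
    (hy : ReflTransGen (fun a b => s.GroupEdge E (s.anchor u) a b ∧ b ≠ u) u y)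
    (hyz : s.GroupEdge E (s.anchor u) y z ∧ z ≠ u) : (s.place E u q₁ q₂).GroupEdge E u y z :=
  hyz.1.place hyz.2 (place_anchor_of_adopted ⟨hy.tail hyz, hyz.2⟩)

theorem extends_place (hu : u ∉ s.placed) : s.Extends (s.place E u q₁ q₂) := by
  refine ⟨Set.subset_insert _ _, fun v hv => ?_⟩
  have hvu : v ≠ u := ne_of_mem_of_not_mem hv hu
  simp [hvu]

theorem Valid.anchor_ne (hs : s.Valid E root) (hu : u ∉ s.placed) : s.anchor u ≠ u :=
  ne_of_mem_of_not_mem (hs.anchor_mem u hu) hu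

theorem Valid.treeLE_place (hs : s.Valid E root) (hu : u ∉ s.placed)
    (h : s.TreeLE root v (s.anchor u)) : (s.place E u q₁ q₂).TreeLE root v u := by
  refine ((extends_place hu).treeLE h).tail ⟨Set.mem_insert _ _, ?_, by simp⟩
  exact ne_of_mem_of_not_mem hs.root_mem hu |>.symm

theorem slot_le_place_slot (hu : u ∉ s.placed) (hv : v ∈ s.placed)
    (hq₁ : s.slot (s.anchor u) < q₁) (hq : q₁ < q₂) :
    s.slot v ≤ (s.place E u q₁ q₂).slot v := by
  have hvu : v ≠ u := ne_of_mem_of_not_mem hv hu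
  by_cases hvm : v = s.anchor u
  · subst hvm
    simp only [place_slot, Function.update_of_ne hvu, Function.update_self]
    linarith
  · simp [hvu, hvm]

namespace Valid

variable (hs : s.Valid E root) (hu : u ∉ s.placed)
include hs hu

theorem place_separated (hq₁ : s.slot (s.anchor u) < q₁) (hq₂ : q₂ < s.hi (s.anchor u))
    (hz : z ∈ s.placed) (hzu : ¬ (s.place E u q₁ q₂).TreeLE root z u) :
    (s.place E u q₁ q₂).hi z < (s.place E u q₁ q₂).lo u ∨
      (s.place E u q₁ q₂).hi u < (s.place E u q₁ q₂).lo z := by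
  simp only [place_hi, place_lo, Function.update_self,
    Function.update_of_ne (ne_of_mem_of_not_mem hz hu)]
  rcases hs.anchor_position u hu z hz with h | h | h
  · exact absurd (hs.treeLE_place hu h) hzu
  · left; linarith
  · right; linarith

theorem place_disjoint (hq₁ : s.slot (s.anchor u) < q₁) (hq₂ : q₂ < s.hi (s.anchor u)) :
    ∀ a ∈ (s.place E u q₁ q₂).placed, ∀ b ∈ (s.place E u q₁ q₂).placed,
      ¬ (s.place E u q₁ q₂).TreeLE root a b → ¬ (s.place E u q₁ q₂).TreeLE root b a →
      (s.place E u q₁ q₂).hi a < (s.place E u q₁ q₂).lo b ∨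
        (s.place E u q₁ q₂).hi b < (s.place E u q₁ q₂).lo a := by
  intro a ha' b hb' hab hba
  rcases mem_place.1 ha' with rfl | ha <;> rcases mem_place.1 hb' with rfl | hb
  · exact absurd .refl hab
  · exact (hs.place_separated hu hq₁ hq₂ hb hba).symm
  · exact hs.place_separated hu hq₁ hq₂ ha hab
  · simp only [place_hi, place_lo, Function.update_of_ne (ne_of_mem_of_not_mem ha hu),
      Function.update_of_ne (ne_of_mem_of_not_mem hb hu)]
    exact hs.disjoint a ha b hb (fun h => hab ((extends_place hu).treeLE h))
      (fun h => hba ((extends_place hu).treeLE h))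

theorem place_edge_placed (hq₁ : s.slot (s.anchor u) < q₁) (hq₂ : q₂ < s.hi (s.anchor u)) :
    ∀ a ∈ (s.place E u q₁ q₂).placed, ∀ b ∈ (s.place E u q₁ q₂).placed, E a b →
      (s.place E u q₁ q₂).TreeLE root a b ∨ (s.place E u q₁ q₂).TreeLE root b a ∨
        (s.place E u q₁ q₂).hi b < (s.place E u q₁ q₂).lo a := by
  intro a ha' b hb' hab
  rcases mem_place.1 ha' with rfl | ha <;> rcases mem_place.1 hb' with rfl | hb
  · exact .inl .refl
  · rcases hs.edge_from_unplaced a hu b hb hab with h | h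
    · exact .inr (.inl (hs.treeLE_place hu h))
    · simp only [place_hi, place_lo, Function.update_self,
        Function.update_of_ne (ne_of_mem_of_not_mem hb hu)]
      right; right; linarith
  · rcases hs.edge_to_unplaced b hu a ha hab with h | h
    · exact .inl (hs.treeLE_place hu h)
    · simp only [place_hi, place_lo, Function.update_self,
        Function.update_of_ne (ne_of_mem_of_not_mem ha hu)]
      right; right; linarith
  · simp only [place_hi, place_lo, Function.update_of_ne (ne_of_mem_of_not_mem ha hu),
      Function.update_of_ne (ne_of_mem_of_not_mem hb hu)]
    exact (hs.edge_placed a ha b hb hab).imp (extends_place hu).treeLE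
      (Or.imp_left (extends_place hu).treeLE)

theorem place_reach : ∀ x ∉ (s.place E u q₁ q₂).placed,
    ReflTransGen ((s.place E u q₁ q₂).GroupEdge E ((s.place E u q₁ q₂).anchor x))
      ((s.place E u q₁ q₂).anchor x) x := by
  intro x hx'
  obtain ⟨hxu, hx⟩ := not_mem_place.1 hx'
  by_cases hxA : x ∈ s.adopted E u
  · rw [place_anchor_of_adopted hxA]
    exact hxA.1.mono_of_reach fun _ _ hy hyz => groupEdge_place_of_avoid hy hyz
  rw [place_anchor_of_not_adopted hxA]
  by_cases hxm : s.anchor x = s.anchor u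
  · -- a path from the anchor that enters `u` or an adopted vertex stays among them
    have hclosed : ∀ y z, y ∈ insert u (s.adopted E u) → s.GroupEdge E (s.anchor x) y z →
        z ∈ insert u (s.adopted E u) := by
      rintro y z hy ⟨hyz, hz, hzm⟩
      by_cases hzu : z = u
      · exact .inl hzu
      rcases hy with rfl | hy
      · exact .inr (mem_adopted_of_edge hyz hz hzu (hzm.trans hxm))
      · exact .inr (mem_adopted_of_mem_of_edge hy hyz hz hzu (hzm.trans hxm))
    refine ReflTransGen.mono (fun y z ⟨hyz, hzS⟩ => hyz.place (fun h => hzS (.inl h)) ?_) _ _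
      ((hs.reach x hx).avoid_of_closed hclosed (by simp [hxu, hxA]))
    exact place_anchor_of_not_adopted (fun h => hzS (.inr h)) |>.trans hyz.2.2
  · refine ReflTransGen.mono (fun y z hyz => hyz.place ?_ ?_) _ _ (hs.reach x hx)
    · rintro rfl; exact hxm hyz.2.2.symm
    · exact (place_anchor_of_not_adopted fun h => hxm
        (hyz.2.2.symm.trans (adopted_spec h).2.2)).trans hyz.2.2

theorem place_edge_to_unplaced (hq₁ : s.slot (s.anchor u) < q₁)
    (hq₂ : q₂ < s.hi (s.anchor u)) :
    ∀ x ∉ (s.place E u q₁ q₂).placed, ∀ z ∈ (s.place E u q₁ q₂).placed, E z x →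
      (s.place E u q₁ q₂).TreeLE root z ((s.place E u q₁ q₂).anchor x) ∨
        (s.place E u q₁ q₂).hi ((s.place E u q₁ q₂).anchor x) ≤ (s.place E u q₁ q₂).lo z := by
  intro x hx' z hz' hzx
  obtain ⟨hxu, hx⟩ := not_mem_place.1 hx'
  by_cases hxA : x ∈ s.adopted E u
  · rw [place_anchor_of_adopted hxA]
    have hxm := (adopted_spec hxA).2.2
    rcases mem_place.1 hz' with rfl | hz
    · exact .inl .refl
    rcases hs.edge_to_unplaced x hx z hz hzx with h | h
    · exact .inl (hs.treeLE_place hu (hxm ▸ h))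
    · simp only [place_hi, place_lo, Function.update_self,
        Function.update_of_ne (ne_of_mem_of_not_mem hz hu)]
      right; linarith [hxm ▸ h]
  rw [place_anchor_of_not_adopted hxA]
  have hau : s.anchor x ≠ u := ne_of_mem_of_not_mem (hs.anchor_mem x hx) hu
  rcases mem_place.1 hz' with rfl | hz
  · have hxm : s.anchor z ≠ s.anchor x := fun h => hxA (mem_adopted_of_edge hzx hx hxu h.symm)
    have := hs.edge_unplaced z hu x hx hxm hzx
    simp only [place_hi, place_lo, Function.update_self, Function.update_of_ne hau]
    right; linarith
  rcases hs.edge_to_unplaced x hx z hz hzx with h | h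
  · exact .inl ((extends_place hu).treeLE h)
  · simpa only [place_hi, place_lo, Function.update_of_ne hau,
      Function.update_of_ne (ne_of_mem_of_not_mem hz hu)] using .inr h

theorem place_edge_from_unplaced (hq₁ : s.slot (s.anchor u) < q₁) (hq : q₁ < q₂)
    (hq₂ : q₂ < s.hi (s.anchor u)) :
    ∀ x ∉ (s.place E u q₁ q₂).placed, ∀ z ∈ (s.place E u q₁ q₂).placed, E x z →
      (s.place E u q₁ q₂).TreeLE root z ((s.place E u q₁ q₂).anchor x) ∨
        (s.place E u q₁ q₂).hi z ≤ (s.place E u q₁ q₂).slot ((s.place E u q₁ q₂).anchor x) := by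
  intro x hx' z hz' hxz
  obtain ⟨hxu, hx⟩ := not_mem_place.1 hx'
  by_cases hxA : x ∈ s.adopted E u
  · rw [place_anchor_of_adopted hxA]
    have hxm := (adopted_spec hxA).2.2
    rcases mem_place.1 hz' with rfl | hz
    · exact .inl .refl
    rcases hs.edge_from_unplaced x hx z hz hxz with h | h
    · exact .inl (hs.treeLE_place hu (hxm ▸ h))
    · simp only [place_hi, place_slot, Function.update_self,
        Function.update_of_ne (ne_of_mem_of_not_mem hz hu)]
      right; linarith [hxm ▸ h]
  rw [place_anchor_of_not_adopted hxA]
  have hau : s.anchor x ≠ u := ne_of_mem_of_not_mem (hs.anchor_mem x hx) hu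
  rcases mem_place.1 hz' with rfl | hz
  · right
    by_cases hxm : s.anchor x = s.anchor z
    · simp [hxm, hs.anchor_ne hu]
    · have := hs.edge_unplaced x hx z hu hxm hxz
      simp only [place_hi, place_slot, Function.update_self, Function.update_of_ne hau,
        Function.update_of_ne hxm]
      linarith
  rcases hs.edge_from_unplaced x hx z hz hxz with h | h
  · exact .inl ((extends_place hu).treeLE h)
  · have := slot_le_place_slot (E := E) (q₂ := q₂) hu (hs.anchor_mem x hx) hq₁ hq
    simp only [place_hi, Function.update_of_ne (ne_of_mem_of_not_mem hz hu)]
    right; linarith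

theorem place_edge_unplaced (hq₁ : s.slot (s.anchor u) < q₁) (hq : q₁ < q₂)
    (hq₂ : q₂ < s.hi (s.anchor u)) :
    ∀ x ∉ (s.place E u q₁ q₂).placed, ∀ x' ∉ (s.place E u q₁ q₂).placed,
      (s.place E u q₁ q₂).anchor x ≠ (s.place E u q₁ q₂).anchor x' → E x x' →
      (s.place E u q₁ q₂).hi ((s.place E u q₁ q₂).anchor x') ≤
        (s.place E u q₁ q₂).slot ((s.place E u q₁ q₂).anchor x) := by
  intro x hx' x' hx'' hne hxx'
  obtain ⟨hxu, hx⟩ := not_mem_place.1 hx'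
  obtain ⟨hx'u, hx'⟩ := not_mem_place.1 hx''
  have hau : s.anchor x ≠ u := ne_of_mem_of_not_mem (hs.anchor_mem x hx) hu
  have ha'u : s.anchor x' ≠ u := ne_of_mem_of_not_mem (hs.anchor_mem x' hx') hu
  by_cases hxA : x ∈ s.adopted E u <;> by_cases hx'A : x' ∈ s.adopted E u
  · simp [place_anchor_of_adopted hxA, place_anchor_of_adopted hx'A] at hne
  · have hxm := (adopted_spec hxA).2.2
    have hx'm : s.anchor x' ≠ s.anchor u := fun h => hx'A (mem_adopted_of_mem_of_edge hxA hxx' hx' hx'u h)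
    have := hs.edge_unplaced x hx x' hx' (hxm.trans_ne hx'm.symm) hxx'
    simp only [place_anchor_of_adopted hxA, place_anchor_of_not_adopted hx'A, place_hi,
      place_slot, Function.update_self, Function.update_of_ne ha'u]
    linarith [hxm ▸ this]
  · have hx'm := (adopted_spec hx'A).2.2
    simp only [place_anchor_of_adopted hx'A, place_anchor_of_not_adopted hxA, place_hi,
      place_slot, Function.update_self, Function.update_of_ne hau]
    by_cases hxm : s.anchor x = s.anchor u
    · simp [hxm]
    · have := hs.edge_unplaced x hx x' hx' (hx'm ▸ hxm) hxx'
      rw [Function.update_of_ne hxm]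
      linarith [hx'm ▸ this]
  · rw [place_anchor_of_not_adopted hxA, place_anchor_of_not_adopted hx'A] at hne ⊢
    have := hs.edge_unplaced x hx x' hx' hne hxx'
    have := slot_le_place_slot (E := E) (q₂ := q₂) hu (hs.anchor_mem x hx) hq₁ hq
    simp only [place_hi, Function.update_of_ne ha'u]
    linarith

theorem place_anchor_position (hq₁ : s.slot (s.anchor u) < q₁) (hq : q₁ < q₂)
    (hq₂ : q₂ < s.hi (s.anchor u)) :
    ∀ x ∉ (s.place E u q₁ q₂).placed, ∀ z ∈ (s.place E u q₁ q₂).placed,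
      (s.place E u q₁ q₂).TreeLE root z ((s.place E u q₁ q₂).anchor x) ∨
        (s.place E u q₁ q₂).hi z ≤ (s.place E u q₁ q₂).slot ((s.place E u q₁ q₂).anchor x) ∨
        (s.place E u q₁ q₂).hi ((s.place E u q₁ q₂).anchor x) ≤ (s.place E u q₁ q₂).lo z := by
  intro x hx' z hz'
  obtain ⟨-, hx⟩ := not_mem_place.1 hx'
  have hau : s.anchor x ≠ u := ne_of_mem_of_not_mem (hs.anchor_mem x hx) hu
  have hlo := hs.lo_le_slot u hu
  by_cases hxA : x ∈ s.adopted E u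
  · rw [place_anchor_of_adopted hxA]
    have hxm := (adopted_spec hxA).2.2
    rcases mem_place.1 hz' with rfl | hz
    · exact .inl .refl
    simp only [place_hi, place_lo, place_slot, Function.update_self,
      Function.update_of_ne (ne_of_mem_of_not_mem hz hu)]
    rcases hxm ▸ hs.anchor_position x hx z hz with h | h | h
    · exact .inl (hs.treeLE_place hu h)
    · right; left; linarith
    · right; right; linarith
  rw [place_anchor_of_not_adopted hxA]
  rcases mem_place.1 hz' with rfl | hz
  · right
    simp only [place_hi, place_lo, place_slot, Function.update_self, Function.update_of_ne hau]
    by_cases hxm : s.anchor x = s.anchor z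
    · simp [hxm]
    rw [Function.update_of_ne hxm]
    rcases hs.anchor_position x hx (s.anchor z) (hs.anchor_mem z hu) with h | h | h
    · have := hs.hi_le_slot_of_treeLE h (Ne.symm hxm)
      right; linarith
    · left; linarith
    · right; linarith
  have := slot_le_place_slot (E := E) (q₂ := q₂) hu (hs.anchor_mem x hx) hq₁ hq
  simp only [place_hi, place_lo, Function.update_of_ne hau,
    Function.update_of_ne (ne_of_mem_of_not_mem hz hu)]
  rcases hs.anchor_position x hx z hz with h | h | h
  · exact .inl ((extends_place hu).treeLE h)
  · right; left; linarith
  · right; right; linarith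

theorem place_hi_le_slot_parent (hq₁ : s.slot (s.anchor u) < q₁) (hq : q₁ < q₂) :
    ∀ v ∈ (s.place E u q₁ q₂).placed, v ≠ root →
      (s.place E u q₁ q₂).hi v ≤ (s.place E u q₁ q₂).slot ((s.place E u q₁ q₂).parent v) := by
  intro v hv' hvr
  rcases mem_place.1 hv' with rfl | hv
  · simp [hs.anchor_ne hu]
  · have := slot_le_place_slot (E := E) (q₂ := q₂) hu (hs.parent_mem v hv hvr) hq₁ hq
    simp only [place_parent, place_hi, Function.update_of_ne (ne_of_mem_of_not_mem hv hu)]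
    exact (hs.hi_le_slot_parent v hv hvr).trans this

theorem place_lo_le_slot (hq₁ : s.slot (s.anchor u) < q₁) (hq : q₁ < q₂) :
    ∀ x ∉ (s.place E u q₁ q₂).placed,
      (s.place E u q₁ q₂).lo ((s.place E u q₁ q₂).anchor x) ≤
        (s.place E u q₁ q₂).slot ((s.place E u q₁ q₂).anchor x) := by
  intro x hx'
  obtain ⟨-, hx⟩ := not_mem_place.1 hx'
  by_cases hxA : x ∈ s.adopted E u
  · simp [place_anchor_of_adopted hxA]
  · have := slot_le_place_slot (E := E) (q₂ := q₂) hu (hs.anchor_mem x hx) hq₁ hq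
    simp only [place_anchor_of_not_adopted hxA, place_lo,
      Function.update_of_ne (ne_of_mem_of_not_mem (hs.anchor_mem x hx) hu)]
    exact (hs.lo_le_slot x hx).trans this

theorem place_slot_lt_hi (hq : q₁ < q₂) (hq₂ : q₂ < s.hi (s.anchor u)) :
    ∀ x ∉ (s.place E u q₁ q₂).placed,
      (s.place E u q₁ q₂).slot ((s.place E u q₁ q₂).anchor x) <
        (s.place E u q₁ q₂).hi ((s.place E u q₁ q₂).anchor x) := by
  intro x hx'
  obtain ⟨-, hx⟩ := not_mem_place.1 hx'
  by_cases hxA : x ∈ s.adopted E u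
  · simpa [place_anchor_of_adopted hxA] using hq
  · simp only [place_anchor_of_not_adopted hxA, place_hi, place_slot,
      Function.update_of_ne (ne_of_mem_of_not_mem (hs.anchor_mem x hx) hu)]
    by_cases hxm : s.anchor x = s.anchor u
    · simpa [hxm] using hq₂
    · simpa [Function.update_of_ne hxm] using hs.slot_lt_hi x hx

theorem place (hE : E (s.anchor u) u) (hq₁ : s.slot (s.anchor u) < q₁) (hq : q₁ < q₂)
    (hq₂ : q₂ < s.hi (s.anchor u)) : (s.place E u q₁ q₂).Valid E root := by
  have hm := hs.anchor_mem u hu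
  have hold : ∀ v ∈ s.placed, v ≠ u := fun v hv => ne_of_mem_of_not_mem hv hu
  refine ⟨.inr hs.root_mem, ?_, ?_, ?_, ?_, hs.place_hi_le_slot_parent hu hq₁ hq, ?_, ?_,
    hs.place_disjoint hu hq₁ hq₂, hs.place_edge_placed hu hq₁ hq₂, ?_,
    hs.place_lo_le_slot hu hq₁ hq, hs.place_slot_lt_hi hu hq hq₂, hs.place_reach hu,
    hs.place_edge_to_unplaced hu hq₁ hq₂, hs.place_edge_from_unplaced hu hq₁ hq hq₂,
    hs.place_edge_unplaced hu hq₁ hq hq₂, hs.place_anchor_position hu hq₁ hq hq₂⟩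
  · intro v hv' hvr
    rcases mem_place.1 hv' with rfl | hv
    · rw [place_parent, Function.update_self]
      exact mem_place.2 (.inr hm)
    · rw [place_parent, Function.update_of_ne (hold v hv)]
      exact mem_place.2 (.inr (hs.parent_mem v hv hvr))
  · intro v hv' hvr
    rcases mem_place.1 hv' with rfl | hv
    · simpa using hE
    · simpa [hold v hv] using hs.edge_parent v hv hvr
  · intro v hv' hvr
    rcases mem_place.1 hv' with rfl | hv
    · simp only [place_parent, place_lo, Function.update_self, Function.update_of_ne (hold _ hm)]
      linarith [hs.lo_le_slot _ hu]
    · simpa [hold v hv, hold _ (hs.parent_mem v hv hvr)] using hs.lo_parent_lt v hv hvr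
  · intro v hv' hvr
    rcases mem_place.1 hv' with rfl | hv
    · simpa [hold _ hm] using hq₂
    · simpa [hold v hv, hold _ (hs.parent_mem v hv hvr)] using hs.hi_lt_parent v hv hvr
  · intro v hv'
    rcases mem_place.1 hv' with rfl | hv
    · simpa using hq
    · simpa [hold v hv] using hs.lo_lt_hi v hv
  · intro v hv'
    rcases mem_place.1 hv' with rfl | hv
    · exact hs.treeLE_place hu (hs.root_le _ hm)
    · exact (extends_place hu).treeLE (hs.root_le v hv)
  · intro x hx'
    obtain ⟨-, hx⟩ := not_mem_place.1 hx'
    by_cases hxA : x ∈ s.adopted E u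
    · simp [place_anchor_of_adopted hxA, mem_place]
    · simpa [place_anchor_of_not_adopted hxA] using .inr (hs.anchor_mem x hx)

end Valid

/-- Hang the first vertex `u` of a path from the anchor of `w` to `w` inside its group; cutting
the rest of the path at its last visit of `u` leaves a shorter path from `u`, the new anchor. -/
theorem exists_extends_mem_of_reachIn (n : ℕ) : ∀ s : Stage V, s.Valid E root → ∀ w ∉ s.placed,
    ReachIn (s.GroupEdge E (s.anchor w)) n (s.anchor w) w →
    ∃ t : Stage V, t.Valid E root ∧ s.Extends t ∧ w ∈ t.placed := by
  induction n using Nat.strong_induction_on with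
  | _ n ih =>
  intro s hs w hw hpath
  cases n with
  | zero => exact absurd ((hpath : s.anchor w = w) ▸ hs.anchor_mem w hw) hw
  | succ k =>
  obtain ⟨u, ⟨hE, hu, hum⟩, hpath⟩ := hpath.head
  rw [← hum] at hE hpath
  obtain ⟨q₁, hq₁, hq⟩ := exists_between (hs.slot_lt_hi u hu)
  obtain ⟨q₂, hq, hq₂⟩ := exists_between hq
  have hext : s.Extends (s.place E u q₁ q₂) := extends_place hu
  by_cases hwu : w = u
  · exact ⟨_, hs.place hu hE hq₁ hq hq₂, hext, .inl hwu⟩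
  obtain ⟨j, hj, hpath⟩ := hpath.exists_le_avoid_source
  have hwA : w ∈ s.adopted E u := ⟨hpath.reflTransGen, hwu⟩
  have hpath' : ReachIn ((s.place E u q₁ q₂).GroupEdge E ((s.place E u q₁ q₂).anchor w)) j
      ((s.place E u q₁ q₂).anchor w) w := by
    rw [place_anchor_of_adopted hwA]
    exact hpath.mono_of_reach fun _ _ hy hyz => groupEdge_place_of_avoid hy hyz
  obtain ⟨t, ht, hext', hwt⟩ := ih j (by omega) _ (hs.place hu hE hq₁ hq hq₂) w
    (not_mem_place.2 ⟨hwu, hw⟩) hpath'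
  exact ⟨t, ht, hext.trans hext', hwt⟩

theorem Valid.exists_extends_mem (hs : s.Valid E root) (w : V) :
    ∃ t : Stage V, t.Valid E root ∧ s.Extends t ∧ w ∈ t.placed := by
  by_cases hw : w ∈ s.placed
  · exact ⟨s, hs, .refl s, hw⟩
  obtain ⟨n, hn⟩ := (hs.reach w hw).exists_reachIn
  exact exists_extends_mem_of_reachIn n s hs w hw hn

structure Exhaustion (E : V → V → Prop) (root : V) (f : ℕ → Stage V) : Prop where
  valid : ∀ n, (f n).Valid E root
  extends_succ : ∀ n, (f n).Extends (f (n + 1))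
  exhaustive : ∀ v, ∃ n, v ∈ (f n).placed

theorem exists_exhaustion [Countable V] (hreach : ∀ v, ReflTransGen E root v) :
    ∃ f : ℕ → Stage V, Exhaustion E root f := by
  have : Nonempty V := ⟨root⟩
  obtain ⟨e, he⟩ := exists_surjective_nat V
  choose next hnext using fun (s : {s : Stage V // s.Valid E root}) (w : V) =>
    s.2.exists_extends_mem w
  let g : ℕ → {s : Stage V // s.Valid E root} := fun n =>
    Nat.rec ⟨init root, valid_init hreach⟩ (fun k s => ⟨next s (e k), (hnext s (e k)).1⟩) n
  refine ⟨fun n => (g n).1, fun n => (g n).2, fun n => (hnext (g n) (e n)).2.1, fun v => ?_⟩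
  obtain ⟨k, rfl⟩ := he v
  exact ⟨k + 1, (hnext (g k) (e k)).2.2⟩

def LimitEdge (root : V) (f : ℕ → Stage V) (a b : V) : Prop := ∃ n, (f n).TreeEdge root a b

theorem limit_of_treeLE {n : ℕ} (h : (f n).TreeLE root a b) :
    ReflTransGen (LimitEdge root f) a b :=
  ReflTransGen.mono (fun _ _ h => ⟨n, h⟩) _ _ h

noncomputable def limitHi (hf : Exhaustion E root f) (v : V) : ℚ :=
  (f (hf.exhaustive v).choose).hi v

namespace Exhaustion

variable (hf : Exhaustion E root f)
include hf

theorem extends_of_le {m n : ℕ} (h : m ≤ n) : (f m).Extends (f n) := by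
  induction h with
  | refl => exact .refl _
  | step _ ih => exact ih.trans (hf.extends_succ _)

theorem parent_eq_and_hi_eq {m n : ℕ} (hm : v ∈ (f m).placed) (hn : v ∈ (f n).placed) :
    (f m).parent v = (f n).parent v ∧ (f m).hi v = (f n).hi v := by
  rcases le_total m n with h | h
  · exact ⟨((hf.extends_of_le h).2 v hm).1.symm, ((hf.extends_of_le h).2 v hm).2.symm⟩
  · exact (hf.extends_of_le h).2 v hn

theorem limitHi_eq {n : ℕ} (hv : v ∈ (f n).placed) : limitHi hf v = (f n).hi v :=
  (hf.parent_eq_and_hi_eq (hf.exhaustive v).choose_spec hv).2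

theorem treeEdge_of_limitEdge {n : ℕ} (h : LimitEdge root f a b) (hb : b ∈ (f n).placed) :
    (f n).TreeEdge root a b := by
  obtain ⟨m, hbm, hbr, rfl⟩ := h
  exact ⟨hb, hbr, (hf.parent_eq_and_hi_eq hb hbm).1⟩

theorem treeLE_of_limit {n : ℕ} (h : ReflTransGen (LimitEdge root f) a b)
    (hb : b ∈ (f n).placed) : (f n).TreeLE root a b := by
  induction h with
  | refl => exact .refl
  | tail _ hcb ih =>
    have hcb := hf.treeEdge_of_limitEdge hcb hb
    exact (ih (hcb.2.2 ▸ (hf.valid n).parent_mem _ hb hcb.2.1)).tail hcb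

theorem limitHi_lt_of_normalAssistant (h : NormalAssistant E (LimitEdge root f) a b) :
    limitHi hf b < limitHi hf a := by
  rcases h with ⟨n, hb, hbr, rfl⟩ | ⟨hab, hba, v, w, hav, hbw, hE⟩
  · rw [hf.limitHi_eq hb, hf.limitHi_eq ((hf.valid n).parent_mem b hb hbr)]
    exact (hf.valid n).hi_lt_parent b hb hbr
  obtain ⟨m, hv⟩ := hf.exhaustive v
  obtain ⟨m', hw⟩ := hf.exhaustive w
  have hv := (hf.extends_of_le (le_max_left m m')).1 hv
  have hw := (hf.extends_of_le (le_max_right m m')).1 hw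
  have hav := hf.treeLE_of_limit hav hv
  have hbw := hf.treeLE_of_limit hbw hw
  have hs := hf.valid (max m m')
  rw [hf.limitHi_eq (hs.mem_of_treeLE hav hv), hf.limitHi_eq (hs.mem_of_treeLE hbw hw)]
  exact hs.hi_lt_hi_of_incomparable hv hw hav hbw hE (fun h => hab (limit_of_treeLE h))
    (fun h => hba (limit_of_treeLE h))

theorem isSpanningArborescence : IsSpanningArborescence E (LimitEdge root f) root := by
  refine ⟨fun a b ⟨n, hb, hbr, hab⟩ => hab ▸ (hf.valid n).edge_parent b hb hbr,
    fun _ ⟨_, _, hr, _⟩ => hr rfl, fun v hvr => ?_, fun v => ?_⟩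
  · obtain ⟨n, hv⟩ := hf.exhaustive v
    exact ⟨(f n).parent v, ⟨n, hv, hvr, rfl⟩,
      fun _ ha => (hf.treeEdge_of_limitEdge ha hv).2.2.symm⟩
  · obtain ⟨n, hv⟩ := hf.exhaustive v
    exact limit_of_treeLE ((hf.valid n).root_le v hv)

theorem isNormal : IsNormal E (LimitEdge root f) := fun _ ha =>
  lt_irrefl _ (ha.lt_of_forall_lt fun _ _ h => hf.limitHi_lt_of_normalAssistant h)

end Exhaustion

end Stage

theorem stmt_15_general {V : Type*} [Countable V] (E : V → V → Prop)
    (r : V) (h_reach : ∀ v : V, Relation.ReflTransGen E r v) :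
    ∃ T : V → V → Prop, IsSpanningArborescence E T r ∧ IsNormal E T := by
  obtain ⟨f, hf⟩ := Stage.exists_exhaustion h_reach
  exact ⟨_, hf.isSpanningArborescence, hf.isNormal⟩

theorem stmt_15 {V : Type*} [Countable V] (E : V → V → Prop)
    (h_irr : ∀ v : V, ¬ E v v)
    (r : V) (h_reach : ∀ v : V, Relation.ReflTransGen E r v) :
    ∃ T : V → V → Prop, IsSpanningArborescence E T r ∧ IsNormal E T :=
  stmt_15_general E r h_reach
end

section
/- Let D be a finite tournament with a normal spanning arborescence T, and let v₁ ⊴ v₂ ⊴ … ⊴ v_k be the enumeration of all vertices of D in increasing normal order of T. Then E v_i v_{i+1} holds for every i < k; in particular v₁, v₂, …, v_k is a directed Hamilton path of D that respects the normal order of T. -/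
/-
The normal order is a linear order in which consecutive vertices `v ⊲ w` form a cover, and a
cover in the reflexive-transitive closure of an acyclic relation is a single edge of it: so
`v, w` are joined by an edge of the normal assistant. Either it is a tree edge, hence an edge of
`D`, or `v, w` are tree-incomparable; then an edge `w → v` of the tournament would give the
assistant edge `w → v` as well, closing a 2-cycle.
-/

open Relation

namespace Relation

variable {α : Type*} {r : α → α → Prop}

theorem reflTransGen_antisymm_of_irreflexive_transGen (hr : Irreflexive (TransGen r)) {a b : α}
    (hab : ReflTransGen r a b) (hba : ReflTransGen r b a) : a = b := by
  rcases reflTransGen_iff_eq_or_transGen.1 hab with rfl | hab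
  · rfl
  rcases reflTransGen_iff_eq_or_transGen.1 hba with rfl | hba
  · rfl
  exact absurd (hab.trans hba) (hr a)

theorem rel_of_transGen_of_forall_between (hr : Irreflexive (TransGen r)) {a b : α}
    (hab : TransGen r a b)
    (hbetween : ∀ x, ReflTransGen r a x → ReflTransGen r x b → x = a ∨ x = b) : r a b := by
  obtain ⟨x, hax, hxb⟩ := TransGen.head'_iff.1 hab
  rcases hbetween x (ReflTransGen.single hax) hxb with rfl | rfl
  · exact absurd (TransGen.single hax) (hr x)
  · exact hax

theorem rel_succ_of_bijective_of_monotone (hr : Irreflexive (TransGen r)) {k : ℕ}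
    {e : Fin k → α} (he : Function.Bijective e)
    (hmono : ∀ i j : Fin k, i ≤ j → ReflTransGen r (e i) (e j))
    (i : ℕ) (hi : i + 1 < k) : r (e ⟨i, Nat.lt_of_succ_lt hi⟩) (e ⟨i + 1, hi⟩) := by
  have hne : e ⟨i, Nat.lt_of_succ_lt hi⟩ ≠ e ⟨i + 1, hi⟩ := fun h => by
    simpa [Fin.ext_iff] using he.1 h
  have hlt : TransGen r (e ⟨i, Nat.lt_of_succ_lt hi⟩) (e ⟨i + 1, hi⟩) :=
    (reflTransGen_iff_eq_or_transGen.1 (hmono _ _ (Fin.le_def.2 (Nat.le_succ i)))).resolve_left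
      hne.symm
  refine rel_of_transGen_of_forall_between hr hlt fun x hax hxb => ?_
  obtain ⟨m, rfl⟩ := he.2 x
  rcases le_or_gt m ⟨i, Nat.lt_of_succ_lt hi⟩ with hm | hm
  · exact .inl (reflTransGen_antisymm_of_irreflexive_transGen hr (hmono _ _ hm) hax)
  · exact .inr (reflTransGen_antisymm_of_irreflexive_transGen hr hxb (hmono _ _ hm))

end Relation

theorem IsNormal.edge_of_normalAssistant {V : Type*} {E T : V → V → Prop}
    (h_norm : IsNormal E T) (hTE : ∀ u v : V, T u v → E u v)
    (h_tour : ∀ u v : V, u ≠ v → Xor' (E u v) (E v u)) {v w : V}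
    (hvw : NormalAssistant E T v w) : E v w := by
  rcases hvw with hT | hinc
  · exact hTE _ _ hT
  have ⟨hnvw, hnwv, _⟩ := hinc
  have hne : v ≠ w := by
    rintro rfl
    exact hnvw ReflTransGen.refl
  rcases h_tour v w hne with ⟨hvw, -⟩ | ⟨hwv, -⟩
  · exact hvw
  have hvw' : NormalAssistant E T v w := .inr hinc
  have hwv' : NormalAssistant E T w v :=
    .inr ⟨hnwv, hnvw, w, v, ReflTransGen.refl, ReflTransGen.refl, hwv⟩
  exact absurd ((TransGen.single hvw').tail hwv') (h_norm v)

theorem stmt_19_general {V : Type*} (E T : V → V → Prop)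
    (h_tour : ∀ u v : V, u ≠ v → Xor' (E u v) (E v u))
    (root : V)
    (h_arb : IsSpanningArborescence E T root)
    (h_norm : IsNormal E T)
    (k : ℕ) (e : Fin k → V) (h_bij : Function.Bijective e)
    (h_mono : ∀ i j : Fin k, i ≤ j → Relation.ReflTransGen (NormalAssistant E T) (e i) (e j)) :
    ∀ (i : ℕ) (hi : i + 1 < k), E (e ⟨i, Nat.lt_of_succ_lt hi⟩) (e ⟨i + 1, hi⟩) := fun i hi =>
  h_norm.edge_of_normalAssistant h_arb.1 h_tour
    (rel_succ_of_bijective_of_monotone h_norm h_bij h_mono i hi)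

theorem stmt_19 {V : Type*} [Fintype V] (E T : V → V → Prop)
    (h_irr : ∀ v : V, ¬ E v v)
    (h_tour : ∀ u v : V, u ≠ v → Xor' (E u v) (E v u))
    (root : V)
    (h_arb : IsSpanningArborescence E T root)
    (h_norm : IsNormal E T)
    (k : ℕ) (e : Fin k → V) (h_bij : Function.Bijective e)
    (h_mono : ∀ i j : Fin k, i ≤ j → Relation.ReflTransGen (NormalAssistant E T) (e i) (e j)) :
    ∀ (i : ℕ) (hi : i + 1 < k), E (e ⟨i, Nat.lt_of_succ_lt hi⟩) (e ⟨i + 1, hi⟩) :=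
  stmt_19_general E T h_tour root h_arb h_norm k e h_bij h_mono
end
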